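/- arXiv:1112.4816 — 6 statements merged into one kernel-verified Lean document; each statement's English description precedes it below -/
import Mathlib

section
/- Let A = ∏_p A_p be a countable product of compact groups with normalized Haar measures ν_p, ν = ∏_p ν_p, and χ = ∏_p χ_p: A → {±1} a non-trivial character where each χ_p: A_p → {±1} is a continuous quadratic character, trivial for almost all p. Let G = ker χ and S = ∏_p S_p with each S_p ⊆ A_p measurable of positive measure. Then ν(G ∩ S)/ν(G) = (1 + ∏_p E_p)·ν(S), where E_p = (1/ν_p(S_p))·∫_{S_p} χ_p dν_p. -/
/-!
The cylinder hypothesis identifies `μ` with the product measure `Measure.infinitePi ν`. Let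
`S_J = {x | ∀ i ∈ J, x i ∈ S i}` for a finite set `J` of coordinates containing the support of
`χ`. Since `χ = ±1`, the indicator of `G ∩ S_J` is
`(∏ i ∈ J, 1_{S i} + ∏ i ∈ J, 1_{S i} χ i) / 2`, and both products integrate coordinatewise;
hence `μ (G ∩ S_J) = (1 + ∏ E i) / 2 * μ S_J`. Letting `J` exhaust the countable index set
gives the same identity for `S` itself. For `S = A` the factor `E i₀` of a non-trivial `χ i₀`
vanishes by invariance of Haar measure, so `μ G = 1 / 2`.
-/

open MeasureTheory Filter Topology Set

theorem finprod_eq_prod_of_eq_one_of_subset {ι M : Type*} [CommMonoid M] {f : ι → M}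
    {F J : Finset ι} (hF : ∀ i ∉ F, f i = 1) (hJ : F ⊆ J) : ∏ᶠ i, f i = ∏ i ∈ J, f i :=
  finprod_eq_prod_of_mulSupport_subset f <|
    Function.mulSupport_subset_iff'.2 fun i hi => hF i fun hiF => hi (hJ hiF)

theorem indicator_prod_eq_one_inter_pi {ι : Type*} {X : ι → Type*} (J : Finset ι)
    {χ : ∀ i, X i → ℝ} (hval : ∀ i a, χ i a = 1 ∨ χ i a = -1) (S : ∀ i, Set (X i)) (x : ∀ i, X i) :
    ({x | ∏ i ∈ J, χ i (x i) = 1} ∩ (J : Set ι).pi S).indicator 1 x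
      = (∏ i ∈ J, (S i).indicator 1 (x i) + ∏ i ∈ J, (S i).indicator (χ i) (x i)) / 2 := by
  by_cases hx : x ∈ (J : Set ι).pi S
  · have hxS : ∀ i ∈ J, x i ∈ S i := hx
    simp only [Finset.prod_congr rfl fun i hi => indicator_of_mem (hxS i hi) _, Pi.one_apply,
      Finset.prod_const_one]
    rcases Finset.prod_induction (s := J) (fun i => χ i (x i)) (fun r : ℝ => r = 1 ∨ r = -1)
      (by rintro _ _ (rfl | rfl) (rfl | rfl) <;> norm_num) (Or.inl rfl)
      (fun i _ => hval i (x i)) with h | h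
    · rw [indicator_of_mem (show x ∈ _ ∩ _ from ⟨h, hx⟩), h]; norm_num
    · rw [indicator_of_notMem fun hG => by norm_num [h] at hG, h]; norm_num
  · obtain ⟨i, hiJ, hi⟩ : ∃ i ∈ J, x i ∉ S i := by simpa [Set.mem_pi] using hx
    rw [indicator_of_notMem fun hG => hx hG.2,
      Finset.prod_eq_zero hiJ (indicator_of_notMem hi _),
      Finset.prod_eq_zero hiJ (indicator_of_notMem hi _)]
    norm_num

theorem integral_monoidHom_eq_zero_of_ne_one {G : Type*} [Group G] [MeasurableSpace G]
    [MeasurableMul G] (ν : Measure G) [ν.IsMulLeftInvariant] {χ : G →* ℝ} (hχ : χ ≠ 1) :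
    ∫ x, χ x ∂ν = 0 := by
  obtain ⟨a, ha⟩ : ∃ a, χ a ≠ 1 := by
    by_contra! h
    exact hχ (MonoidHom.ext h)
  have h := integral_mul_left_eq_self (μ := ν) (fun x => χ x) a
  simp only [map_mul, integral_const_mul] at h
  have : (χ a - 1) * ∫ x, χ x ∂ν = 0 := by linarith
  exact (mul_eq_zero.1 this).resolve_left (sub_ne_zero.2 ha)

section InfinitePi

variable {ι : Type*} {X : ι → Type*} [∀ i, MeasurableSpace (X i)]

theorem eq_infinitePi_of_measure_univ_pi (ν : ∀ i, Measure (X i))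
    [∀ i, IsProbabilityMeasure (ν i)] {μ : Measure (∀ i, X i)}
    (hμ : ∀ T : ∀ i, Set (X i), (∀ i, MeasurableSet (T i)) →
      {i | T i ≠ univ}.Finite → μ (univ.pi T) = ∏ᶠ i, ν i (T i)) :
    μ = Measure.infinitePi ν := by
  classical
  refine Measure.eq_infinitePi ν fun J T hT => ?_
  set T' := (J : Set ι).piecewise T fun _ => univ
  have hT' : ∀ i, MeasurableSet (T' i) := fun i => by
    by_cases hi : i ∈ J <;> simp [T', hi, hT]
  have hsupp : {i | T' i ≠ univ} ⊆ J := fun i hi => by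
    by_contra hiJ
    exact hi (piecewise_eq_of_notMem _ _ _ hiJ)
  rw [← univ_pi_piecewise_univ, hμ T' hT' (J.finite_toSet.subset hsupp),
    finprod_eq_prod_of_mulSupport_subset _ fun i hi => ?_]
  · exact Finset.prod_congr rfl fun i hi => by simp [T', hi]
  · by_contra hiJ
    exact hi (by simp [T', piecewise_eq_of_notMem _ _ _ hiJ])

theorem tendsto_measureReal_inter_finset_pi [Countable ι] (μ : Measure (∀ i, X i))
    [IsFiniteMeasure μ] {B : Set (∀ i, X i)} (hB : MeasurableSet B) {S : ∀ i, Set (X i)}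
    (hS : ∀ i, MeasurableSet (S i)) :
    Tendsto (fun J : Finset ι => μ.real (B ∩ (J : Set ι).pi S)) atTop
      (𝓝 (μ.real (B ∩ univ.pi S))) := by
  have hInter : ⋂ J : Finset ι, B ∩ (J : Set ι).pi S = B ∩ univ.pi S := by
    ext x
    simp only [mem_iInter, mem_inter_iff, Set.mem_pi, mem_univ, true_implies]
    exact ⟨fun h => ⟨(h ∅).1, fun i => (h {i}).2 i (Finset.mem_singleton_self i)⟩,
      fun h J => ⟨h.1, fun i _ => h.2 i⟩⟩
  have hanti : Antitone fun J : Finset ι => B ∩ (J : Set ι).pi S := fun J J' h =>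
    inter_subset_inter_right _ (pi_mono' (fun _ _ => le_rfl) (by simpa using h))
  have := tendsto_measure_iInter_atTop (μ := μ)
    (fun J => (hB.inter (MeasurableSet.pi J.countable_toSet fun i _ => hS i)).nullMeasurableSet)
    hanti ⟨∅, measure_ne_top μ _⟩
  rw [hInter] at this
  exact (ENNReal.tendsto_toReal (measure_ne_top μ _)).comp this

theorem integrable_finset_prod_of_norm_le_one (μ : Measure (∀ i, X i)) [IsFiniteMeasure μ]
    (J : Finset ι) {f : ∀ i, X i → ℝ} (hf : ∀ i, Measurable (f i)) (hf1 : ∀ i a, ‖f i a‖ ≤ 1) :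
    Integrable (fun x => ∏ i ∈ J, f i (x i)) μ :=
  .of_bound (C := 1)
    (Finset.measurable_prod _ fun i _ => (hf i).comp (measurable_pi_apply i)).aestronglyMeasurable
    (ae_of_all _ fun x => by
      rw [norm_prod]
      exact Finset.prod_le_one (fun _ _ => norm_nonneg _) fun i _ => hf1 i (x i))

theorem integral_finset_prod_infinitePi (ν : ∀ i, Measure (X i))
    [∀ i, IsProbabilityMeasure (ν i)] (J : Finset ι) {f : ∀ i, X i → ℝ}
    (hf : ∀ i, AEStronglyMeasurable (f i) (ν i)) :
    ∫ x, ∏ i ∈ J, f i (x i) ∂Measure.infinitePi ν = ∏ i ∈ J, ∫ y, f i y ∂ν i := by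
  calc ∫ x, ∏ i ∈ J, f i (x i) ∂Measure.infinitePi ν
      = ∫ x, ∏ i : J, f i (J.restrict x i) ∂Measure.infinitePi ν := by
        congr 1 with x
        exact (J.prod_coe_sort fun i => f i (x i)).symm
    _ = ∏ i : J, ∫ y, f i y ∂ν i := by
        rw [integral_restrict_infinitePi ν (f := fun y : ∀ i : J, X i => ∏ i : J, f i (y i))
          (Finset.aestronglyMeasurable_fun_prod _ fun i _ =>
            (hf i).comp_quasiMeasurePreserving (Measure.quasiMeasurePreserving_eval _ i)),
          integral_fintype_prod_eq_prod]
    _ = ∏ i ∈ J, ∫ y, f i y ∂ν i := J.prod_coe_sort fun i => ∫ y, f i y ∂ν i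

theorem measureReal_prod_eq_one_inter_pi (ν : ∀ i, Measure (X i))
    [∀ i, IsProbabilityMeasure (ν i)] (J : Finset ι) {χ : ∀ i, X i → ℝ}
    (hχ : ∀ i, Measurable (χ i)) (hval : ∀ i a, χ i a = 1 ∨ χ i a = -1)
    {S : ∀ i, Set (X i)} (hS : ∀ i, MeasurableSet (S i)) :
    (Measure.infinitePi ν).real ({x | ∏ i ∈ J, χ i (x i) = 1} ∩ (J : Set ι).pi S)
      = (∏ i ∈ J, (ν i).real (S i) + ∏ i ∈ J, ∫ y in S i, χ i y ∂ν i) / 2 := by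
  have hmeas : ∀ i, Measurable ((S i).indicator (χ i)) := fun i => (hχ i).indicator (hS i)
  have hG : MeasurableSet {x : ∀ i, X i | ∏ i ∈ J, χ i (x i) = 1} :=
    measurableSet_eq_fun (by fun_prop) measurable_const
  rw [← integral_indicator_one (hG.inter (.pi J.countable_toSet fun i _ => hS i))]
  simp_rw [indicator_prod_eq_one_inter_pi J hval S]
  rw [integral_div, integral_add
      (integrable_finset_prod_of_norm_le_one _ J (fun i => measurable_one.indicator (hS i))
        fun i a => (norm_indicator_le_norm_self _ _).trans (by simp))
      (integrable_finset_prod_of_norm_le_one _ J hmeas fun i a =>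
        (norm_indicator_le_norm_self _ _).trans (by rcases hval i a with h | h <;> simp [h])),
    integral_finset_prod_infinitePi ν J
      fun i => (measurable_one.indicator (hS i)).aestronglyMeasurable,
    integral_finset_prod_infinitePi ν J fun i => (hmeas i).aestronglyMeasurable]
  simp_rw [integral_indicator_one (hS _), integral_indicator (hS _)]

theorem measureReal_finprod_eq_one_inter_finset_pi (ν : ∀ i, Measure (X i))
    [∀ i, IsProbabilityMeasure (ν i)] {χ : ∀ i, X i → ℝ} (hχ : ∀ i, Measurable (χ i))
    (hval : ∀ i a, χ i a = 1 ∨ χ i a = -1) {F J : Finset ι} (hF : ∀ i ∉ F, ∀ a, χ i a = 1)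
    (hJ : F ⊆ J) {S : ∀ i, Set (X i)} (hS : ∀ i, MeasurableSet (S i))
    (hpos : ∀ i, ν i (S i) ≠ 0) :
    (Measure.infinitePi ν).real ({x | ∏ᶠ i, χ i (x i) = 1} ∩ (J : Set ι).pi S)
      = (1 + ∏ᶠ i, (∫ y in S i, χ i y ∂ν i) / (ν i).real (S i)) / 2
          * (Measure.infinitePi ν).real ((J : Set ι).pi S) := by
  have hνS : ∀ i, (ν i).real (S i) ≠ 0 := fun i =>
    ENNReal.toReal_ne_zero.2 ⟨hpos i, measure_ne_top _ _⟩
  have hE : ∏ᶠ i, (∫ y in S i, χ i y ∂ν i) / (ν i).real (S i)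
      = ∏ i ∈ J, (∫ y in S i, χ i y ∂ν i) / (ν i).real (S i) :=
    finprod_eq_prod_of_eq_one_of_subset (fun i hi => by simp [hF i hi, hνS i]) hJ
  simp_rw [fun x : ∀ i, X i => finprod_eq_prod_of_eq_one_of_subset (fun i hi => hF i hi (x i)) hJ]
  rw [measureReal_prod_eq_one_inter_pi ν J hχ hval hS, hE, measureReal_def,
    Measure.infinitePi_pi ν fun i _ => hS i, ENNReal.toReal_prod,
    ← Finset.prod_congr rfl fun i _ => div_mul_cancel₀ (∫ y in S i, χ i y ∂ν i) (hνS i),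
    Finset.prod_mul_distrib]
  simp only [measureReal_def]
  ring

theorem measureReal_finprod_eq_one_inter_univ_pi [Countable ι] (ν : ∀ i, Measure (X i))
    [∀ i, IsProbabilityMeasure (ν i)] {χ : ∀ i, X i → ℝ} (hχ : ∀ i, Measurable (χ i))
    (hval : ∀ i a, χ i a = 1 ∨ χ i a = -1) {F : Finset ι} (hF : ∀ i ∉ F, ∀ a, χ i a = 1)
    {S : ∀ i, Set (X i)} (hS : ∀ i, MeasurableSet (S i)) (hpos : ∀ i, ν i (S i) ≠ 0) :
    (Measure.infinitePi ν).real ({x | ∏ᶠ i, χ i (x i) = 1} ∩ univ.pi S)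
      = (1 + ∏ᶠ i, (∫ y in S i, χ i y ∂ν i) / (ν i).real (S i)) / 2
          * (Measure.infinitePi ν).real (univ.pi S) := by
  have hG : MeasurableSet {x : ∀ i, X i | ∏ᶠ i, χ i (x i) = 1} := by
    simp_rw [fun x : ∀ i, X i =>
      finprod_eq_prod_of_eq_one_of_subset (fun i hi => hF i hi (x i)) subset_rfl]
    exact measurableSet_eq_fun (by fun_prop) measurable_const
  have hlim := tendsto_measureReal_inter_finset_pi (Measure.infinitePi ν) .univ hS
  simp only [univ_inter] at hlim
  exact tendsto_nhds_unique_of_eventuallyEq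
    (tendsto_measureReal_inter_finset_pi _ hG hS) (hlim.const_mul _)
    ((eventually_ge_atTop F).mono fun J hJ =>
      measureReal_finprod_eq_one_inter_finset_pi ν hχ hval hF hJ hS hpos)

end InfinitePi

theorem character_sum_density_product_general
    {ι : Type*} [Countable ι] {A : ι → Type*} [∀ i, Group (A i)]
    [∀ i, TopologicalSpace (A i)] [∀ i, IsTopologicalGroup (A i)]
    [∀ i, MeasurableSpace (A i)] [∀ i, BorelSpace (A i)]
    (ν : ∀ i, Measure (A i)) [∀ i, (ν i).IsHaarMeasure] [∀ i, IsProbabilityMeasure (ν i)]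
    (μ : Measure (∀ i, A i))
    (hμ : ∀ T : (i : ι) → Set (A i), (∀ i, MeasurableSet (T i)) →
      {i | T i ≠ Set.univ}.Finite → μ (Set.univ.pi T) = ∏ᶠ i, ν i (T i))
    (χ : ∀ i, A i →* ℝ) (hχc : ∀ i, Continuous (χ i))
    (hval : ∀ i a, χ i a = 1 ∨ χ i a = -1)
    (hfin : {i | χ i ≠ 1}.Finite) (hnt : ∃ i, χ i ≠ 1)
    (S : ∀ i, Set (A i)) (hS : ∀ i, MeasurableSet (S i)) (hpos : ∀ i, 0 < ν i (S i)) :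
    (μ ({x : ∀ i, A i | ∏ᶠ i, χ i (x i) = 1} ∩ Set.univ.pi S)).toReal
        / (μ {x : ∀ i, A i | ∏ᶠ i, χ i (x i) = 1}).toReal
      = (1 + ∏ᶠ i, (∫ x in S i, χ i x ∂(ν i)) / (ν i (S i)).toReal)
          * (μ (Set.univ.pi S)).toReal := by
  obtain ⟨i₀, hi₀⟩ := hnt
  obtain rfl := eq_infinitePi_of_measure_univ_pi ν hμ
  have hF : ∀ i ∉ hfin.toFinset, ∀ a, χ i a = 1 := fun i hi a => by
    rw [hfin.mem_toFinset, mem_ofPred_eq, not_not] at hi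
    rw [hi, MonoidHom.one_apply]
  have density := fun (S : ∀ i, Set (A i)) hS hpos =>
    measureReal_finprod_eq_one_inter_univ_pi ν (fun i => (hχc i).measurable) hval hF
      (S := S) hS hpos
  have hhalf : (Measure.infinitePi ν).real {x | ∏ᶠ i, χ i (x i) = 1} = 1 / 2 := by
    have h := density (fun _ => univ) (fun _ => .univ) (fun i => by simp)
    rw [finprod_eq_zero _ i₀ (by simp [integral_monoidHom_eq_zero_of_ne_one (ν i₀) hi₀])
      (hfin.subset fun i hi => ?_)] at h
    · simpa using h
    · exact fun h1 => hi (by simp [h1])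
  simp only [← measureReal_def]
  rw [density S hS fun i => (hpos i).ne', hhalf]
  ring

/-- Character sums over a countable product of compact groups: for `A = ∏ p, A p` with
normalized Haar measures `ν p`, product (Haar) measure `μ`, and a non-trivial character
`χ = ∏ p, χ p` with each `χ p : A p → {±1}` continuous and almost all trivial, with kernel
`G`, and `S = ∏ p, S p` with each `S p` measurable of positive measure, one has
`μ(G ∩ S)/μ(G) = (1 + ∏ p, E p) · μ(S)` where `E p` is the average of `χ p` on `S p`. -/
theorem character_sum_density_product
    {ι : Type*} [Countable ι] {A : ι → Type*} [∀ i, Group (A i)]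
    [∀ i, TopologicalSpace (A i)] [∀ i, IsTopologicalGroup (A i)] [∀ i, CompactSpace (A i)]
    [∀ i, MeasurableSpace (A i)] [∀ i, BorelSpace (A i)]
    (ν : ∀ i, Measure (A i)) [∀ i, (ν i).IsHaarMeasure] [∀ i, IsProbabilityMeasure (ν i)]
    (μ : Measure (∀ i, A i)) [μ.IsHaarMeasure] [IsProbabilityMeasure μ]
    (hμ : ∀ T : (i : ι) → Set (A i), (∀ i, MeasurableSet (T i)) →
      {i | T i ≠ Set.univ}.Finite → μ (Set.univ.pi T) = ∏ᶠ i, ν i (T i))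
    (χ : ∀ i, A i →* ℝ) (hχc : ∀ i, Continuous (χ i))
    (hval : ∀ i a, χ i a = 1 ∨ χ i a = -1)
    (hfin : {i | χ i ≠ 1}.Finite) (hnt : ∃ i, χ i ≠ 1)
    (S : ∀ i, Set (A i)) (hS : ∀ i, MeasurableSet (S i)) (hpos : ∀ i, 0 < ν i (S i)) :
    (μ ({x : ∀ i, A i | ∏ᶠ i, χ i (x i) = 1} ∩ Set.univ.pi S)).toReal
        / (μ {x : ∀ i, A i | ∏ᶠ i, χ i (x i) = 1}).toReal
      = (1 + ∏ᶠ i, (∫ x in S i, χ i x ∂(ν i)) / (ν i (S i)).toReal)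
          * (μ (Set.univ.pi S)).toReal :=
  character_sum_density_product_general ν μ hμ χ hχc hval hfin hnt S hS hpos
end

section
/- In the setting of the product character-sum theorem, if S has positive measure then ν(G ∩ S)/ν(G) = 0 if and only if there exists a family of signs ε_p ∈ {±1}, almost all equal to 1, with ∏_p ε_p = −1 and χ_p = ε_p ν_p-almost everywhere on S_p for every p. -/
/-!
Only the finitely many coordinates on which `χ` is nontrivial matter, and under `μ` they are
independent of the others: the cylinder on which `χ i = σ i` on `S i` for every `i` has measure
`∏ ν i (S i ∩ {χ i = σ i})` times the (positive) measure of the untouched part of `∏ S i`.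
So `G ∩ ∏ S i` is null iff no sign pattern `σ` with `∏ σ = 1` is taken with positive measure on
every `S i`. Pick for each `i` a sign `ε i` that `χ i` takes with positive measure on `S i`; then
`∏ ε = -1`, and flipping a single `ε i` shows that `χ i = ε i` almost everywhere on `S i`.
Conversely such signs force `∏ χ i (x i) = -1` for almost every `x ∈ ∏ S i`. The denominator
`μ G` is nonzero because translating by an element with `∏ χ = -1` swaps `G` and its complement.
-/

open MeasureTheory Filter Topology Set

theorem finprod_eq_one_or_neg_one {ι M : Type*} [CommMonoid M] [HasDistribNeg M] {f : ι → M}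
    (hf : ∀ i, f i = 1 ∨ f i = -1) : ∏ᶠ i, f i = 1 ∨ ∏ᶠ i, f i = -1 :=
  finprod_induction (fun y => y = 1 ∨ y = -1) (Or.inl rfl)
    (fun x y hx hy => by rcases hx with rfl | rfl <;> rcases hy with rfl | rfl <;> simp) hf

section SignValued

variable {α : Type*} [MeasurableSpace α] {ν : Measure α} {S : Set α} {f : α → ℝ}

theorem exists_sign_measure_inter_preimage_ne_zero (hf : ∀ a, f a = 1 ∨ f a = -1)
    (hS : ν S ≠ 0) : ∃ e : ℝ, (e = 1 ∨ e = -1) ∧ ν (S ∩ f ⁻¹' {e}) ≠ 0 := by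
  by_contra! h
  refine hS (measure_mono_null (fun a ha => ?_)
    (measure_union_null (h 1 (.inl rfl)) (h (-1) (.inr rfl))))
  exact (hf a).imp (fun h => ⟨ha, h⟩) fun h => ⟨ha, h⟩

theorem ae_restrict_eq_of_measure_inter_preimage_neg_eq_zero {e : ℝ}
    (hf : ∀ a, f a = 1 ∨ f a = -1) (he : e = 1 ∨ e = -1) (hS : MeasurableSet S)
    (hnull : ν (S ∩ f ⁻¹' {-e}) = 0) : ∀ᵐ a ∂ν.restrict S, f a = e := by
  rw [ae_restrict_iff' hS]
  filter_upwards [measure_eq_zero_iff_ae_notMem.1 hnull] with a ha haS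
  rcases hf a with h | h <;> rcases he with rfl | rfl <;> simp_all

end SignValued

section Characters

variable {ι : Type*} {A : ι → Type*} [∀ i, Group (A i)] {χ : ∀ i, A i →* ℝ}

theorem hasFiniteMulSupport_apply (hfin : {i | χ i ≠ 1}.Finite) (x : ∀ i, A i) :
    (fun i => χ i (x i)).HasFiniteMulSupport :=
  hfin.subset fun i hi h => hi (by simp [h])

theorem measure_setOf_finprod_eq_one_ne_zero [∀ i, MeasurableSpace (A i)]
    [∀ i, MeasurableMul (A i)] (μ : Measure (∀ i, A i)) [μ.IsMulLeftInvariant] [NeZero μ]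
    (hval : ∀ i a, χ i a = 1 ∨ χ i a = -1) (hfin : {i | χ i ≠ 1}.Finite) (hnt : ∃ i, χ i ≠ 1) :
    μ {x | ∏ᶠ i, χ i (x i) = 1} ≠ 0 := by
  classical
  obtain ⟨i₀, hi₀⟩ := hnt
  obtain ⟨b, hb⟩ := DFunLike.ne_iff.1 hi₀
  set a : ∀ i, A i := Pi.mulSingle i₀ b
  have ha : ∏ᶠ i, χ i (a i) = -1 := by
    rw [finprod_eq_single _ i₀ fun i hi => by simp [a, hi]]
    simpa [a] using (hval i₀ b).resolve_left hb
  have hcover : univ ⊆ {x | ∏ᶠ i, χ i (x i) = 1} ∪ (a * ·) ⁻¹' {x | ∏ᶠ i, χ i (x i) = 1} := by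
    intro x _
    refine (finprod_eq_one_or_neg_one fun i => hval i (x i)).imp id fun hx => ?_
    simp only [mem_preimage, mem_ofPred_eq, Pi.mul_apply, map_mul]
    rw [finprod_mul_distrib (hasFiniteMulSupport_apply hfin a) (hasFiniteMulSupport_apply hfin x),
      ha, hx, neg_one_mul, neg_neg]
  intro hG
  refine NeZero.ne μ (Measure.measure_univ_eq_zero.1 (measure_mono_null hcover ?_))
  exact measure_union_null hG (by rwa [measure_preimage_mul])

end Characters

section CylinderProduct

variable {ι : Type*} {A : ι → Type*} [∀ i, MeasurableSpace (A i)]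

def IsProductOnCylinders (ν : ∀ i, Measure (A i)) (μ : Measure (∀ i, A i)) : Prop :=
  ∀ T : (i : ι) → Set (A i), (∀ i, MeasurableSet (T i)) →
    {i | T i ≠ univ}.Finite → μ (univ.pi T) = ∏ᶠ i, ν i (T i)

theorem tendsto_measure_univ_pi_piecewise [Countable ι] [DecidableEq ι]
    (μ : Measure (∀ i, A i)) [IsFiniteMeasure μ] {T : ∀ i, Set (A i)}
    (hT : ∀ i, MeasurableSet (T i)) :
    Tendsto (fun s : Finset ι => μ (univ.pi (s.piecewise T fun _ => univ))) atTop
      (𝓝 (μ (univ.pi T))) := by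
  have hinter : ⋂ s : Finset ι, univ.pi (s.piecewise T fun _ => univ) = univ.pi T := by
    ext x
    simp only [mem_iInter, mem_univ_pi]
    refine ⟨fun hx i => by simpa using hx {i} i, fun hx s i => ?_⟩
    exact s.piecewise_cases _ _ (fun t => x i ∈ t) (hx i) trivial
  rw [← hinter]
  refine tendsto_measure_iInter_atTop
    (fun s => (MeasurableSet.univ_pi fun i => ?_).nullMeasurableSet)
    (fun s t hst => pi_mono fun i _ => ?_) ⟨∅, measure_ne_top _ _⟩
  · exact s.piecewise_cases T (fun _ => univ) (fun t => MeasurableSet t) (hT i) .univ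
  · by_cases hi : i ∈ s
    · simp [hi, hst hi]
    · simp [hi]

namespace IsProductOnCylinders

variable {ν : ∀ i, Measure (A i)} {μ : Measure (∀ i, A i)} [∀ i, IsProbabilityMeasure (ν i)]
  {f : ∀ i, A i → ℝ} {S T : ∀ i, Set (A i)} (hμ : IsProductOnCylinders ν μ)
include hμ

theorem measure_univ_pi_piecewise [DecidableEq ι] (hT : ∀ i, MeasurableSet (T i))
    (s : Finset ι) : μ (univ.pi (s.piecewise T fun _ => univ)) = ∏ i ∈ s, ν i (T i) := by
  have hsupp : {i | s.piecewise T (fun _ => univ) i ≠ univ} ⊆ s := fun i hi => by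
    by_contra h
    exact hi (s.piecewise_eq_of_notMem _ _ h)
  rw [hμ _ (fun i => s.piecewise_cases T (fun _ => univ) (fun t => MeasurableSet t) (hT i) .univ)
    (s.finite_toSet.subset hsupp), finprod_eq_prod_of_mulSupport_subset]
  · exact Finset.prod_congr rfl fun i hi => by rw [s.piecewise_eq_of_mem _ _ hi]
  · intro i hi
    by_contra h
    exact hi (by simp only [s.piecewise_eq_of_notMem _ _ h, measure_univ])

theorem measure_eval_preimage (i : ι) {U : Set (A i)} (hU : MeasurableSet U) :
    μ (Function.eval i ⁻¹' U) = ν i U := by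
  classical
  rw [← univ_pi_update_univ, hμ _ (fun j => ?_) ((finite_singleton i).subset fun j hj => ?_),
    finprod_eq_single _ i fun j hj => by rw [Function.update_of_ne hj, measure_univ],
    Function.update_self]
  · rcases eq_or_ne j i with rfl | h <;> simp [*]
  · by_contra h
    exact hj (Function.update_of_ne h _ _)

theorem measure_univ_pi_eq_prod_mul [Countable ι] [DecidableEq ι] [IsFiniteMeasure μ]
    (hT : ∀ i, MeasurableSet (T i)) (F : Finset ι) :
    μ (univ.pi T) = (∏ i ∈ F, ν i (T i)) * μ (univ.pi (F.piecewise (fun _ => univ) T)) := by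
  have hT' : ∀ i, MeasurableSet (F.piecewise (fun _ => univ) T i) := fun i =>
    F.piecewise_cases (fun _ => univ) T (fun t => MeasurableSet t) .univ (hT i)
  refine tendsto_nhds_unique (tendsto_measure_univ_pi_piecewise μ hT) ?_
  refine (ENNReal.Tendsto.const_mul (tendsto_measure_univ_pi_piecewise μ hT')
    (Or.inr (ENNReal.prod_ne_top fun i _ => measure_ne_top _ _))).congr' ?_
  filter_upwards [eventually_ge_atTop F] with s hFs
  have hin : ∏ i ∈ F, ν i (F.piecewise (fun _ => univ) T i) = 1 :=
    Finset.prod_eq_one fun i hi => by rw [F.piecewise_eq_of_mem _ _ hi, measure_univ]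
  have hout : ∏ i ∈ s \ F, ν i (F.piecewise (fun _ => univ) T i) = ∏ i ∈ s \ F, ν i (T i) :=
    Finset.prod_congr rfl fun i hi => by rw [F.piecewise_eq_of_notMem _ _ (Finset.mem_sdiff.1 hi).2]
  rw [hμ.measure_univ_pi_piecewise hT, hμ.measure_univ_pi_piecewise hT', ← Finset.prod_sdiff hFs,
    hin, hout, mul_one, ← Finset.prod_sdiff hFs, mul_comm]

theorem measure_univ_pi_ne_zero_of_finite_ne [Countable ι] [IsFiniteMeasure μ]
    (hS : ∀ i, MeasurableSet (S i)) (hT : ∀ i, MeasurableSet (T i))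
    (hTS : {i | T i ≠ S i}.Finite) (hTpos : ∀ i, ν i (T i) ≠ 0) (hSpos : μ (univ.pi S) ≠ 0) :
    μ (univ.pi T) ≠ 0 := by
  classical
  have hoff : hTS.toFinset.piecewise (fun _ => univ) T = hTS.toFinset.piecewise (fun _ => univ) S :=
    hTS.toFinset.piecewise_congr (fun _ _ => rfl) fun i hi => by simpa using hi
  rw [hμ.measure_univ_pi_eq_prod_mul hS hTS.toFinset] at hSpos
  rw [hμ.measure_univ_pi_eq_prod_mul hT hTS.toFinset, hoff]
  exact mul_ne_zero (Finset.prod_ne_zero_iff.2 fun i _ => hTpos i) (right_ne_zero_of_mul hSpos)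

theorem exists_signs_of_measure_inter_eq_zero [Countable ι] [IsFiniteMeasure μ]
    (hf : ∀ i, Measurable (f i)) (hval : ∀ i a, f i a = 1 ∨ f i a = -1)
    (hfin : {i | f i ≠ 1}.Finite) (hS : ∀ i, MeasurableSet (S i)) (hpos : ∀ i, ν i (S i) ≠ 0)
    (hSpos : μ (univ.pi S) ≠ 0) (hnull : μ ({x | ∏ᶠ i, f i (x i) = 1} ∩ univ.pi S) = 0) :
    ∃ ε : ι → ℝ, (∀ i, ε i = 1 ∨ ε i = -1) ∧ {i | ε i ≠ 1}.Finite ∧ ∏ᶠ i, ε i = -1 ∧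
      ∀ i, ∀ᵐ a ∂(ν i).restrict (S i), f i a = ε i := by
  classical
  have hpattern : ∀ σ : ι → ℝ, σ.HasFiniteMulSupport →
      (∀ i, ν i (S i ∩ f i ⁻¹' {σ i}) ≠ 0) → ∏ᶠ i, σ i ≠ 1 := by
    intro σ hσ hσpos hprod
    have hsub : univ.pi (fun i => S i ∩ f i ⁻¹' {σ i}) ⊆ {x | ∏ᶠ i, f i (x i) = 1} ∩ univ.pi S :=
      fun x hx => ⟨hprod ▸ finprod_congr fun i => (hx i trivial).2, fun i _ => (hx i trivial).1⟩
    have hoff : {i | S i ∩ f i ⁻¹' {σ i} ≠ S i} ⊆ σ.mulSupport ∪ {i | f i ≠ 1} := by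
      intro i hi
      by_contra h
      simp only [mem_union, Function.mem_mulSupport, mem_ofPred_eq, not_or, not_not] at h
      exact hi (by rw [h.1, h.2]; exact inter_eq_left.2 fun a _ => rfl)
    exact hμ.measure_univ_pi_ne_zero_of_finite_ne hS
      (fun i => (hS i).inter (hf i (measurableSet_singleton _))) ((hσ.union hfin).subset hoff)
      hσpos hSpos (measure_mono_null hsub hnull)
  choose ε hε_sign hε_pos using fun i =>
    exists_sign_measure_inter_preimage_ne_zero (hval i) (hpos i)
  have hε_fin : ε.HasFiniteMulSupport := hfin.subset fun i hi h1 => hi <| by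
    obtain ⟨a, -, ha⟩ := nonempty_of_measure_ne_zero (hε_pos i)
    simpa [h1] using ha.symm
  have hε_prod : ∏ᶠ i, ε i = -1 :=
    (finprod_eq_one_or_neg_one hε_sign).resolve_left (hpattern ε hε_fin hε_pos)
  refine ⟨ε, hε_sign, hε_fin, hε_prod, fun i => ?_⟩
  refine ae_restrict_eq_of_measure_inter_preimage_neg_eq_zero (hval i) (hε_sign i) (hS i) ?_
  -- otherwise flipping the sign of `ε` at `i` gives a pattern of product `1`
  by_contra hflip
  have hflip_fin : (Pi.mulSingle i (-1 : ℝ)).HasFiniteMulSupport :=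
    (finite_singleton i).subset Pi.mulSupport_mulSingle_subset
  refine hpattern (ε * Pi.mulSingle i (-1)) (hε_fin.mul hflip_fin) (fun j => ?_) ?_
  · rcases eq_or_ne j i with rfl | hj
    · simpa using hflip
    · simpa [hj] using hε_pos j
  · simp only [Pi.mul_apply]
    rw [finprod_mul_distrib hε_fin hflip_fin, hε_prod,
      finprod_eq_single _ i fun j hj => Pi.mulSingle_eq_of_ne hj _, Pi.mulSingle_eq_same]
    norm_num

theorem measure_inter_eq_zero_of_signs [Countable ι] (hf : ∀ i, Measurable (f i))
    (hS : ∀ i, MeasurableSet (S i)) {ε : ι → ℝ} (hε_prod : ∏ᶠ i, ε i = -1)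
    (hε : ∀ i, ∀ᵐ a ∂(ν i).restrict (S i), f i a = ε i) :
    μ ({x | ∏ᶠ i, f i (x i) = 1} ∩ univ.pi S) = 0 := by
  have hsub : {x | ∏ᶠ i, f i (x i) = 1} ∩ univ.pi S ⊆
      ⋃ i, Function.eval i ⁻¹' (S i ∩ {a | f i a ≠ ε i}) := by
    rintro x ⟨hx, hxS⟩
    by_contra h
    simp only [mem_iUnion, mem_preimage, Function.eval, mem_inter_iff, mem_ofPred_eq, not_exists,
      not_and, not_not] at h
    rw [mem_ofPred_eq, finprod_congr fun i => h i (hxS i trivial), hε_prod] at hx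
    norm_num at hx
  refine measure_mono_null hsub (measure_iUnion_null fun i => ?_)
  have hbad : MeasurableSet (S i ∩ {a | f i a ≠ ε i}) :=
    (hS i).inter (hf i (measurableSet_singleton _)).compl
  rw [hμ.measure_eval_preimage i hbad, inter_comm, ← Measure.restrict_apply' (hS i)]
  exact ae_iff.1 (hε i)

end IsProductOnCylinders

end CylinderProduct

theorem character_sum_density_vanishing_iff_general
    {ι : Type*} [Countable ι] {A : ι → Type*} [∀ i, Group (A i)]
    [∀ i, TopologicalSpace (A i)] [∀ i, IsTopologicalGroup (A i)]
    [∀ i, MeasurableSpace (A i)] [∀ i, BorelSpace (A i)]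
    (ν : ∀ i, Measure (A i)) [∀ i, IsProbabilityMeasure (ν i)]
    (μ : Measure (∀ i, A i)) [μ.IsHaarMeasure] [IsProbabilityMeasure μ]
    (hμ : ∀ T : (i : ι) → Set (A i), (∀ i, MeasurableSet (T i)) →
      {i | T i ≠ Set.univ}.Finite → μ (Set.univ.pi T) = ∏ᶠ i, ν i (T i))
    (χ : ∀ i, A i →* ℝ) (hχc : ∀ i, Continuous (χ i))
    (hval : ∀ i a, χ i a = 1 ∨ χ i a = -1)
    (hfin : {i | χ i ≠ 1}.Finite) (hnt : ∃ i, χ i ≠ 1)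
    (S : ∀ i, Set (A i)) (hS : ∀ i, MeasurableSet (S i)) (hpos : ∀ i, 0 < ν i (S i))
    (hSpos : 0 < μ (Set.univ.pi S)) :
    (μ ({x : ∀ i, A i | ∏ᶠ i, χ i (x i) = 1} ∩ Set.univ.pi S)).toReal
        / (μ {x : ∀ i, A i | ∏ᶠ i, χ i (x i) = 1}).toReal = 0
      ↔ ∃ ε : ι → ℝ, (∀ i, ε i = 1 ∨ ε i = -1) ∧ {i | ε i ≠ 1}.Finite ∧
          (∏ᶠ i, ε i) = -1 ∧
          ∀ i, ∀ᵐ x ∂((ν i).restrict (S i)), χ i x = ε i := by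
  have hμ : IsProductOnCylinders ν μ := hμ
  have hχ : ∀ i, Measurable (χ i) := fun i => (hχc i).measurable
  have hG : μ {x | ∏ᶠ i, χ i (x i) = 1} ≠ 0 := measure_setOf_finprod_eq_one_ne_zero μ hval hfin hnt
  rw [div_eq_zero_iff, or_iff_left (ENNReal.toReal_ne_zero.2 ⟨hG, measure_ne_top _ _⟩),
    ENNReal.toReal_eq_zero_iff, or_iff_left (measure_ne_top _ _)]
  refine ⟨fun hnull => hμ.exists_signs_of_measure_inter_eq_zero hχ hval
    (hfin.subset fun i hi h => hi (by rw [h]; rfl)) hS (fun i => (hpos i).ne') hSpos.ne' hnull, ?_⟩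
  rintro ⟨ε, -, -, hε_prod, hε⟩
  exact hμ.measure_inter_eq_zero_of_signs hχ hS hε_prod hε

/-- Vanishing criterion for the density in the product character-sum theorem:
`μ(G ∩ S)/μ(G) = 0` iff there are signs `ε p ∈ {±1}`, almost all `1`, with
`∏ p, ε p = -1` and `χ p = ε p` almost everywhere on `S p` for every `p`. -/
theorem character_sum_density_vanishing_iff
    {ι : Type*} [Countable ι] {A : ι → Type*} [∀ i, Group (A i)]
    [∀ i, TopologicalSpace (A i)] [∀ i, IsTopologicalGroup (A i)] [∀ i, CompactSpace (A i)]
    [∀ i, MeasurableSpace (A i)] [∀ i, BorelSpace (A i)]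
    (ν : ∀ i, Measure (A i)) [∀ i, (ν i).IsHaarMeasure] [∀ i, IsProbabilityMeasure (ν i)]
    (μ : Measure (∀ i, A i)) [μ.IsHaarMeasure] [IsProbabilityMeasure μ]
    (hμ : ∀ T : (i : ι) → Set (A i), (∀ i, MeasurableSet (T i)) →
      {i | T i ≠ Set.univ}.Finite → μ (Set.univ.pi T) = ∏ᶠ i, ν i (T i))
    (χ : ∀ i, A i →* ℝ) (hχc : ∀ i, Continuous (χ i))
    (hval : ∀ i a, χ i a = 1 ∨ χ i a = -1)
    (hfin : {i | χ i ≠ 1}.Finite) (hnt : ∃ i, χ i ≠ 1)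
    (S : ∀ i, Set (A i)) (hS : ∀ i, MeasurableSet (S i)) (hpos : ∀ i, 0 < ν i (S i))
    (hSpos : 0 < μ (Set.univ.pi S)) :
    (μ ({x : ∀ i, A i | ∏ᶠ i, χ i (x i) = 1} ∩ Set.univ.pi S)).toReal
        / (μ {x : ∀ i, A i | ∏ᶠ i, χ i (x i) = 1}).toReal = 0
      ↔ ∃ ε : ι → ℝ, (∀ i, ε i = 1 ∨ ε i = -1) ∧ {i | ε i ≠ 1}.Finite ∧
          (∏ᶠ i, ε i) = -1 ∧
          ∀ i, ∀ᵐ x ∂((ν i).restrict (S i)), χ i x = ε i :=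
  character_sum_density_vanishing_iff_general ν μ hμ χ hχc hval hfin hnt S hS hpos hSpos
end

section
/- Let r ∈ ℚ* with r ≠ ±1. Then the subgroup {x ∈ ℚ* : x^k ∈ ⟨r⟩ for some k ≥ 1} of ℚ* is equal to ⟨r₀⟩ × ⟨−1⟩ for some rational number r₀ ∉ {0, 1, −1}, and r₀ is uniquely determined up to sign and inversion. -/
/-!
For a prime `p` with `v_p(r) ≠ 0`, the valuation `v_p` maps the isolator `R` of `⟨r⟩` onto a
subgroup of `ℤ`, which is cyclic, say generated by `v_p(r₀)` with `r₀ ∈ R`. If `x ∈ R` has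
`v_p(x) = 0`, then applying `v_p` to `x ^ k = r ^ m` gives `m = 0`, so `x` is a root of unity,
i.e. `±1`; hence `R = ±⟨r₀⟩`. If also `R = ±⟨r₁⟩`, then `r₁ = ±r₀ ^ n` and `r₀ = ±r₁ ^ m`, so
`r₀ ^ 2 = r₀ ^ (2nm)`; since `r₀` has infinite order, `nm = 1`.
-/

open Subgroup

namespace Subgroup

variable {G : Type*} [CommGroup G]

def isolator (H : Subgroup G) : Subgroup G where
  carrier := {x | ∃ k : ℕ, 0 < k ∧ x ^ k ∈ H}
  one_mem' := ⟨1, one_pos, by simp [H.one_mem]⟩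
  mul_mem' := by
    rintro x y ⟨k, hk, hx⟩ ⟨l, hl, hy⟩
    refine ⟨k * l, Nat.mul_pos hk hl, ?_⟩
    rw [mul_pow, pow_mul, mul_comm k, pow_mul]
    exact H.mul_mem (H.pow_mem hx l) (H.pow_mem hy k)
  inv_mem' := by
    rintro x ⟨k, hk, hx⟩
    exact ⟨k, hk, by simpa using H.inv_mem hx⟩

theorem mem_isolator {H : Subgroup G} {x : G} : x ∈ H.isolator ↔ ∃ k : ℕ, 0 < k ∧ x ^ k ∈ H :=
  Iff.rfl

theorem le_isolator (H : Subgroup G) : H ≤ H.isolator :=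
  fun x hx ↦ ⟨1, one_pos, by simpa using hx⟩

theorem _root_.IsOfFinOrder.mem_isolator {x : G} (hx : IsOfFinOrder x) (H : Subgroup G) :
    x ∈ H.isolator := by
  obtain ⟨k, hk, hxk⟩ := hx.exists_pow_eq_one
  exact ⟨k, hk, hxk ▸ H.one_mem⟩

theorem isOfFinOrder_of_mem_isolator_zpowers {M : Type*} [Group M] [IsMulTorsionFree M]
    (f : G →* M) {r x : G} (hr : f r ≠ 1) (hx : x ∈ (zpowers r).isolator) (hfx : f x = 1) :
    IsOfFinOrder x := by
  obtain ⟨k, hk, hxk⟩ := hx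
  obtain ⟨m, hm⟩ := mem_zpowers_iff.1 hxk
  have hm0 : m = 0 := by
    rw [← IsMulTorsionFree.zpow_eq_one_iff_right hr, ← map_zpow, hm, map_pow, hfx, one_pow]
  exact isOfFinOrder_iff_pow_eq_one.2 ⟨k, hk, by rw [← hm, hm0, zpow_zero]⟩

end Subgroup

section DistribNeg

variable {G : Type*} [CommGroup G] [HasDistribNeg G]

theorem mem_closure_pair_neg_one_iff {a x : G} :
    x ∈ Subgroup.closure ({a, -1} : Set G) ↔ ∃ n : ℤ, x = a ^ n ∨ x = -a ^ n := by
  rw [mem_closure_pair]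
  constructor
  · rintro ⟨m, n, rfl⟩
    refine ⟨m, ?_⟩
    rw [neg_one_zpow_eq_ite]
    split_ifs <;> simp
  · rintro ⟨n, rfl | rfl⟩
    · exact ⟨n, 0, by simp⟩
    · exact ⟨n, 1, by simp⟩

theorem eq_or_eq_inv_or_eq_neg_or_eq_neg_inv_of_closure_eq {a b : G} (ha : ¬IsOfFinOrder a)
    (h : Subgroup.closure ({b, -1} : Set G) = Subgroup.closure ({a, -1} : Set G)) :
    b = a ∨ b = a⁻¹ ∨ b = -a ∨ b = -a⁻¹ := by
  have sq_eq {x y : G} {k : ℤ} : (x = y ^ k ∨ x = -y ^ k) → x ^ (2 : ℤ) = (y ^ (2 : ℤ)) ^ k := by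
    rintro (rfl | rfl) <;> rw [← zpow_mul, mul_comm, zpow_mul]
    rw [even_two.neg_zpow]
  obtain ⟨n, hn⟩ :=
    mem_closure_pair_neg_one_iff.1 (h ▸ subset_closure (by simp) : b ∈ closure {a, -1})
  obtain ⟨m, hm⟩ :=
    mem_closure_pair_neg_one_iff.1 (h ▸ subset_closure (by simp) : a ∈ closure {b, -1})
  have hnm : n * m = 1 := by
    have : a ^ (2 : ℤ) = a ^ (2 * (n * m)) := by
      rw [sq_eq hm, sq_eq hn, ← zpow_mul, ← zpow_mul]
    have := injective_zpow_iff_not_isOfFinOrder.2 ha this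
    omega
  rcases Int.eq_one_or_neg_one_of_mul_eq_one hnm with rfl | rfl <;>
    rcases hn with rfl | rfl <;> simp

end DistribNeg

theorem Rat.units_isOfFinOrder_iff {x : ℚˣ} : IsOfFinOrder x ↔ x = 1 ∨ x = -1 := by
  constructor
  · intro hx
    have hx' := Units.isOfFinOrder_val.2 hx
    rcases le_total 0 (x : ℚ) with h | h
    · exact Or.inl (Units.ext (hx'.eq_one h))
    · exact Or.inr (Units.ext (hx'.eq_neg_one h))
  · rintro (rfl | rfl)
    · exact IsOfFinOrder.one
    · exact isOfFinOrder_iff_pow_eq_one.2 ⟨2, two_pos, neg_one_sq⟩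

theorem Rat.exists_prime_padicValRat_ne_zero {q : ℚ} (h0 : q ≠ 0) (h1 : q ≠ 1) (h2 : q ≠ -1) :
    ∃ p : ℕ, p.Prime ∧ padicValRat p q ≠ 0 := by
  by_contra! h
  have hnum : q.num.natAbs = q.den := by
    rw [Nat.eq_iff_prime_padicValNat_eq _ _ (by simpa using h0) q.den_nz]
    intro p hp
    have := h p hp
    rw [padicValRat_def, sub_eq_zero, padicValInt] at this
    exact_mod_cast this
  have hden : q.den = 1 := by simpa [hnum] using q.reduced
  have hq : (q.num : ℚ) = q := Rat.coe_int_num_of_den_eq_one hden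
  rcases Int.natAbs_eq_iff.1 (hnum.trans hden) with h | h <;> simp_all

noncomputable def padicValUnits (p : ℕ) [Fact p.Prime] : ℚˣ →* Multiplicative ℤ where
  toFun x := .ofAdd (padicValRat p x)
  map_one' := by simp
  map_mul' x y := by simp [padicValRat.mul x.ne_zero y.ne_zero, ofAdd_add]

theorem Rat.exists_isolator_zpowers_eq_closure (f : ℚˣ →* Multiplicative ℤ) {r : ℚˣ}
    (hr : f r ≠ 1) :
    ∃ r₀ : ℚˣ, ¬IsOfFinOrder r₀ ∧ (zpowers r).isolator = Subgroup.closure {r₀, -1} := by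
  set R := (zpowers r).isolator
  obtain ⟨g, hg⟩ := (R.map f).isCyclic_iff_exists_zpowers_eq_top.1 inferInstance
  obtain ⟨r₀, hr₀R, rfl⟩ : g ∈ R.map f := hg ▸ mem_zpowers g
  have hfr₀ : f r₀ ≠ 1 := by
    intro h
    have : f r ∈ R.map f := mem_map_of_mem f (le_isolator _ (mem_zpowers r))
    rw [← hg, h, zpowers_one_eq_bot, mem_bot] at this
    exact hr this
  refine ⟨r₀, fun h ↦ not_isOfFinOrder_of_isMulTorsionFree hfr₀ (f.isOfFinOrder h),
    le_antisymm ?_ ?_⟩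
  · intro x hx
    obtain ⟨n, hn⟩ := mem_zpowers_iff.1 (hg ▸ mem_map_of_mem f hx : f x ∈ zpowers (f r₀))
    have hy : x * (r₀ ^ n)⁻¹ ∈ R := R.mul_mem hx (R.inv_mem (R.zpow_mem hr₀R n))
    have hfy : f (x * (r₀ ^ n)⁻¹) = 1 := by rw [map_mul, map_inv, map_zpow, hn, mul_inv_cancel]
    refine mem_closure_pair_neg_one_iff.2 ⟨n, ?_⟩
    have hy_tors := isOfFinOrder_of_mem_isolator_zpowers f hr hy hfy
    rcases Rat.units_isOfFinOrder_iff.1 hy_tors with h | h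
    · exact Or.inl (mul_inv_eq_one.1 h)
    · exact Or.inr (by rw [← neg_one_mul, ← h, inv_mul_cancel_right])
  · rw [closure_le]
    rintro y (rfl | rfl)
    · exact hr₀R
    · exact (Rat.units_isOfFinOrder_iff.2 (Or.inr rfl)).mem_isolator _

/-- For `r ∈ ℚ*`, `r ≠ ±1`, the group of rationals a positive power of which lies in `⟨r⟩`
is `⟨r₀⟩ × ⟨-1⟩` for some `r₀ ≠ 0, ±1`, and `r₀` is unique up to sign and inversion. -/
theorem exists_r0_generating_rational_radicals (r : ℚˣ) (h1 : r ≠ 1) (h2 : r ≠ -1) :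
    ∃ r₀ : ℚˣ, r₀ ≠ 1 ∧ r₀ ≠ -1 ∧
      (∀ x : ℚˣ, (∃ k : ℕ, 0 < k ∧ x ^ k ∈ Subgroup.zpowers r) ↔
        x ∈ Subgroup.closure ({r₀, -1} : Set ℚˣ)) ∧
      ∀ r₁ : ℚˣ, r₁ ≠ 1 → r₁ ≠ -1 →
        (∀ x : ℚˣ, (∃ k : ℕ, 0 < k ∧ x ^ k ∈ Subgroup.zpowers r) ↔
          x ∈ Subgroup.closure ({r₁, -1} : Set ℚˣ)) →
        r₁ = r₀ ∨ r₁ = r₀⁻¹ ∨ r₁ = -r₀ ∨ r₁ = -r₀⁻¹ := by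
  obtain ⟨p, hp, hpr⟩ := Rat.exists_prime_padicValRat_ne_zero r.ne_zero
    (fun h ↦ h1 (Units.ext h)) (fun h ↦ h2 (Units.ext h))
  have := Fact.mk hp
  obtain ⟨r₀, hr₀, hR⟩ := Rat.exists_isolator_zpowers_eq_closure (padicValUnits p) (r := r)
    (by simpa [padicValUnits] using hpr)
  obtain ⟨hr₀1, hr₀2⟩ := not_or.1 (Rat.units_isOfFinOrder_iff.not.1 hr₀)
  refine ⟨r₀, hr₀1, hr₀2, fun x ↦ by rw [← hR, mem_isolator], fun r₁ _ _ hr₁ ↦ ?_⟩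
  refine eq_or_eq_inv_or_eq_neg_or_eq_neg_inv_of_closure_eq hr₀ ?_
  ext x
  rw [← hr₁, ← hR, mem_isolator]
end

section
/- Let r ∈ ℚ*, r ≠ 0, ±1, and let P = p^k be a prime power. Write r = ±r₀^e as above and let R_P = {x ∈ ℚ̄* : x^P ∈ ⟨r⟩}. Then the cyclic group C_P = R_P/(μ_P·(R_P ∩ ℚ*)) has order P/gcd(P,e), unless r = −r₀^e with −r a square and P > 1 a 2-power dividing e, in which case C_P has order 2. -/
/-!
Since `r` is not a root of unity, `x ↦ n` with `x ^ P = r ^ n` is a homomorphism `R_P → ℤ`; it is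
onto because `ℚ̄` is algebraically closed, its kernel is `μ_P`, and it maps `μ_P · (R_P ∩ ℚ*)`
onto the set of `n` for which `r ^ n` is a `P`-th power in `ℚ*`. So `|C_P| = d` as soon as that
set is `dℤ`.

Because neither `r₀` nor `-r₀` is a perfect power, Bézout shows that `r ^ n = (±1)^n r₀^(en)` is
a `P`-th power in `ℚ*` iff `P ∣ en` and, for even `P`, `r ^ n > 0`; i.e. iff `P / gcd(P, e) ∣ n`,
the sign condition being automatic except when `P` is a power of `2` dividing `e` and `r < 0`.
In that case `-r = r₀^e` is a square and the condition reads `2 ∣ n`.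
-/

noncomputable section

/-- An algebraic closure of `ℚ`. -/
abbrev Qbar : Type := AlgebraicClosure ℚ

/-- The image of `ℚ*` in `Qbar*`. -/
def ratUnits : Subgroup Qbarˣ :=
  (Units.map (algebraMap ℚ Qbar).toMonoidHom).range

/-- The group `R_P = {x ∈ ℚ̄* : x^P ∈ ⟨r⟩}` of `P`-th radicals of `⟨r⟩`. -/
def radicals (r : ℚˣ) (P : ℕ) : Subgroup Qbarˣ :=
  Subgroup.comap (powMonoidHom P)
    (Subgroup.zpowers (Units.map (algebraMap ℚ Qbar).toMonoidHom r))

/-- The subgroup `μ_P · (R_P ∩ ℚ*)` of `R_P`. -/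
def radicalsBase (r : ℚˣ) (P : ℕ) : Subgroup (radicals r P) :=
  (rootsOfUnity P Qbar ⊔ (ratUnits ⊓ radicals r P)).subgroupOf (radicals r P)

/-- The cyclic quotient `C_P = R_P / (μ_P · (R_P ∩ ℚ*))`. -/
def radicalQuot (r : ℚˣ) (P : ℕ) : Type :=
  radicals r P ⧸ radicalsBase r P

open Function Multiplicative

theorem Units.eq_or_eq_neg_of_pow_eq_pow {R : Type*} [Ring R] [LinearOrder R]
    [IsStrictOrderedRing R] {u v : Rˣ} {n : ℕ} (hn : n ≠ 0) (h : u ^ n = v ^ n) :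
    u = v ∨ u = -v := by
  have h' : (u : R) ^ n = (v : R) ^ n := by exact_mod_cast congrArg Units.val h
  rcases (pow_eq_pow_iff_of_ne_zero hn).mp h' with h | ⟨h, -⟩
  · exact Or.inl (Units.ext h)
  · exact Or.inr (Units.ext h)

theorem Units.eq_one_or_eq_neg_one_of_isOfFinOrder {R : Type*} [Ring R] [LinearOrder R]
    [IsStrictOrderedRing R] {u : Rˣ} (hu : IsOfFinOrder u) : u = 1 ∨ u = -1 := by
  obtain ⟨n, hn, h⟩ := isOfFinOrder_iff_pow_eq_one.mp hu
  exact Units.eq_or_eq_neg_of_pow_eq_pow hn.ne' (h.trans (one_pow n).symm)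

theorem Units.val_neg_of_isSquare_neg {R : Type*} [Ring R] [LinearOrder R]
    [IsStrictOrderedRing R] {u : Rˣ} (h : IsSquare (-u)) : (u : R) < 0 := by
  obtain ⟨s, hs⟩ := h
  have hs' : -(u : R) = s * s := by exact_mod_cast congrArg Units.val hs
  exact neg_pos.mp (hs' ▸ mul_self_pos.mpr s.ne_zero)

theorem zpow_pos_iff_even_of_neg {α : Type*} [Field α] [LinearOrder α] [IsStrictOrderedRing α]
    {a : α} (ha : a < 0) {n : ℤ} : 0 < a ^ n ↔ Even n := by
  rcases Int.even_or_odd n with hn | hn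
  · exact iff_of_true (hn.zpow_pos ha.ne) hn
  · exact iff_of_false (hn.zpow_neg ha).not_gt (Int.not_even_iff_odd.mpr hn)

theorem exists_zpow_gcd_eq_zpow {G : Type*} [CommGroup G] {a b : G} {m n : ℤ}
    (h : a ^ m = b ^ n) : ∃ t : G, a ^ (m.gcd n : ℤ) = t ^ n := by
  refine ⟨b ^ m.gcdA n * a ^ m.gcdB n, ?_⟩
  rw [Int.gcd_eq_gcd_ab, zpow_add, zpow_mul, h, ← zpow_mul, zpow_mul a n, mul_zpow,
    ← zpow_mul, ← zpow_mul, mul_comm n, mul_comm n, zpow_mul a]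

theorem Int.natCast_dvd_mul_iff_div_gcd_dvd {P : ℕ} (hP : P ≠ 0) (e : ℕ) (n : ℤ) :
    (P : ℤ) ∣ e * n ↔ ((P / P.gcd e : ℕ) : ℤ) ∣ n := by
  have hg : 0 < P.gcd e := Nat.gcd_pos_of_pos_left e (Nat.pos_of_ne_zero hP)
  obtain ⟨d, e', hcop, hPd, hee⟩ := Nat.exists_coprime P e
  generalize P.gcd e = g at hg hPd hee ⊢
  subst hPd hee
  rw [Nat.mul_div_cancel d hg]
  push_cast
  rw [show (e' : ℤ) * g * n = g * (e' * n) by ring, mul_comm (d : ℤ),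
    mul_dvd_mul_iff_left (by exact_mod_cast hg.ne')]
  exact ⟨(Nat.isCoprime_iff_coprime.mpr hcop).dvd_of_dvd_mul_left,
    fun h => h.mul_left _⟩

theorem IsAlgClosed.surjective_powMonoidHom_units {K : Type*} [Field K] [IsAlgClosed K]
    {n : ℕ} (hn : n ≠ 0) : Surjective (powMonoidHom n : Kˣ →* Kˣ) := by
  intro u
  obtain ⟨z, hz⟩ := IsAlgClosed.exists_pow_nat_eq (u : K) (Nat.pos_of_ne_zero hn)
  have hz0 : z ≠ 0 := by
    rintro rfl
    exact u.ne_zero (by rw [← hz, zero_pow hn])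
  exact ⟨Units.mk0 z hz0, Units.ext (by simpa using hz)⟩

theorem Subgroup.index_eq_of_forall_mem_iff_dvd {H : Type*} [Group H] {B : Subgroup H}
    {ψ : H →* Multiplicative ℤ} (hψ : Surjective ψ) {d : ℕ}
    (hB : ∀ x, x ∈ B ↔ (d : ℤ) ∣ toAdd (ψ x)) : B.index = d := by
  have : B = (AddSubgroup.zmultiples (d : ℤ)).toSubgroup.comap ψ := by
    ext x
    rw [hB, Subgroup.mem_comap, Multiplicative.mem_toSubgroup, Int.mem_zmultiples_iff]
  rw [this, Subgroup.index_comap_of_surjective _ hψ, AddSubgroup.index_toSubgroup,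
    Int.index_zmultiples, Int.natAbs_natCast]

theorem injective_zpowersHom {G : Type*} [Group G] {a : G} (ha : ¬IsOfFinOrder a) :
    Injective (zpowersHom G a) :=
  (injective_zpow_iff_not_isOfFinOrder.mpr ha).comp toAdd.injective

def zpowersEquivInt {G : Type*} [Group G] {a : G} (ha : ¬IsOfFinOrder a) :
    Multiplicative ℤ ≃* Subgroup.zpowers a :=
  (MonoidHom.ofInjective (injective_zpowersHom ha)).trans
    (MulEquiv.subgroupCongr (Subgroup.range_zpowersHom a))

local notation "ι" => Units.map (RingHom.toMonoidHom (algebraMap ℚ Qbar))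

theorem not_isOfFinOrder_units_map {r : ℚˣ} (hr : ¬IsOfFinOrder r) : ¬IsOfFinOrder (ι r) := by
  rwa [(Units.map_injective (algebraMap ℚ Qbar).injective).isOfFinOrder_iff]

theorem mem_radicalsBase_iff {r : ℚˣ} {P : ℕ} {x : radicals r P} :
    x ∈ radicalsBase r P ↔ ∃ q : ℚˣ, (x : Qbarˣ) ^ P = ι (q ^ P) := by
  rw [radicalsBase, Subgroup.mem_subgroupOf, Subgroup.mem_sup]
  constructor
  · rintro ⟨ζ, hζ, _, ⟨⟨q, rfl⟩, -⟩, hx⟩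
    exact ⟨q, by rw [← hx, mul_pow, (mem_rootsOfUnity _ _).mp hζ, one_mul, map_pow]⟩
  · rintro ⟨q, hq⟩
    refine ⟨x * (ι q)⁻¹, ?_, ι q, ⟨⟨q, rfl⟩, ?_⟩, inv_mul_cancel_right _ _⟩
    · rw [mem_rootsOfUnity, mul_pow, hq, map_pow, inv_pow, mul_inv_cancel]
    · show (ι q) ^ P ∈ Subgroup.zpowers (ι r)
      rw [← map_pow, ← hq]
      exact x.2

def radicalsExponent {r : ℚˣ} (hr : ¬IsOfFinOrder r) (P : ℕ) :
    radicals r P →* Multiplicative ℤ :=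
  (zpowersEquivInt (not_isOfFinOrder_units_map hr)).symm.toMonoidHom.comp
    ((powMonoidHom P).subgroupComap (Subgroup.zpowers (ι r)))

section radicalsExponent

variable {r : ℚˣ} (hr : ¬IsOfFinOrder r) {P : ℕ}

theorem zpow_radicalsExponent (x : radicals r P) :
    ι r ^ toAdd (radicalsExponent hr P x) = (x : Qbarˣ) ^ P :=
  congrArg Subtype.val ((zpowersEquivInt (not_isOfFinOrder_units_map hr)).apply_symm_apply
    ((powMonoidHom P).subgroupComap (Subgroup.zpowers (ι r)) x))

theorem radicalsExponent_surjective (hP : P ≠ 0) : Surjective (radicalsExponent hr P) :=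
  (zpowersEquivInt (not_isOfFinOrder_units_map hr)).symm.surjective.comp
    ((powMonoidHom P).subgroupComap_surjective_of_surjective (Subgroup.zpowers (ι r))
      (IsAlgClosed.surjective_powMonoidHom_units hP))

end radicalsExponent

theorem card_radicalQuot_eq {r : ℚˣ} (hr : ¬IsOfFinOrder r) {P : ℕ} (hP : P ≠ 0) {d : ℕ}
    (hd : ∀ n : ℤ, (∃ q : ℚˣ, q ^ P = r ^ n) ↔ (d : ℤ) ∣ n) :
    Nat.card (radicalQuot r P) = d := by
  refine Subgroup.index_eq_of_forall_mem_iff_dvd (radicalsExponent_surjective hr hP) fun x => ?_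
  rw [mem_radicalsBase_iff, ← hd, ← zpow_radicalsExponent hr]
  simp only [← map_zpow, (Units.map_injective (algebraMap ℚ Qbar).injective).eq_iff, eq_comm]

section PerfectPowers

variable {r r₀ : ℚˣ} {e : ℕ}

theorem dvd_of_sq_zpow_eq_sq_pow
    (hnp : ∀ m : ℕ, 2 ≤ m → (¬∃ s : ℚˣ, s ^ m = r₀) ∧ (¬∃ s : ℚˣ, s ^ m = -r₀))
    {q : ℚˣ} {N : ℤ} {P : ℕ} (hP : P ≠ 0) (h : (r₀ ^ N) ^ 2 = (q ^ P) ^ 2) : (P : ℤ) ∣ N := by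
  have h' : r₀ ^ (2 * N) = q ^ ((2 * P : ℕ) : ℤ) := by
    rw [mul_comm, zpow_mul, zpow_natCast, mul_comm, pow_mul, zpow_ofNat, h]
  -- With `g = gcd(2N, 2P)` and `2P = g m`, Bézout gives `r₀ ^ g = (t ^ m) ^ g`, so `r₀ = ±t ^ m`.
  obtain ⟨t, ht⟩ := exists_zpow_gcd_eq_zpow h'
  set g := (2 * N).gcd ((2 * P : ℕ) : ℤ)
  obtain ⟨m, hm⟩ : g ∣ 2 * P := Int.natCast_dvd_natCast.mp (Int.gcd_dvd_right _ _)
  have hg : g ≠ 0 := by rintro hg; rw [hg, zero_mul] at hm; omega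
  rw [hm, zpow_natCast, zpow_natCast, pow_mul'] at ht
  have hm1 : m = 1 := by
    by_contra hm1
    have hm2 : 2 ≤ m := by rcases m with _ | _ | m <;> simp_all
    rcases Units.eq_or_eq_neg_of_pow_eq_pow hg ht with h | h
    · exact (hnp m hm2).1 ⟨t, h.symm⟩
    · exact (hnp m hm2).2 ⟨t, by rw [h, neg_neg]⟩
  have h2P : ((2 * P : ℕ) : ℤ) ∣ 2 * N := by
    rw [hm, hm1, mul_one]
    exact Int.gcd_dvd_left _ _
  push_cast at h2P
  exact (mul_dvd_mul_iff_left two_ne_zero).mp h2P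

theorem exists_pow_eq_zpow_iff (hrep : r = r₀ ^ e ∨ r = -r₀ ^ e)
    (hnp : ∀ m : ℕ, 2 ≤ m → (¬∃ s : ℚˣ, s ^ m = r₀) ∧ (¬∃ s : ℚˣ, s ^ m = -r₀))
    {P : ℕ} (hP : P ≠ 0) (n : ℤ) :
    (∃ q : ℚˣ, q ^ P = r ^ n) ↔ (P : ℤ) ∣ e * n ∧ (Even P → 0 < (r : ℚ) ^ n) := by
  have hsq : (r ^ n) ^ 2 = (r₀ ^ ((e : ℤ) * n)) ^ 2 := by
    have : r ^ 2 = (r₀ ^ e) ^ 2 := by rcases hrep with rfl | rfl <;> simp only [neg_sq]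
    calc (r ^ n) ^ 2 = (r ^ 2) ^ n := by
          rw [← zpow_natCast, ← zpow_natCast, ← zpow_mul, ← zpow_mul, mul_comm]
      _ = (r₀ ^ ((e : ℤ) * n)) ^ 2 := by
          rw [this]
          simp only [← zpow_natCast, ← zpow_mul]
          ring_nf
  constructor
  · rintro ⟨q, hq⟩
    refine ⟨dvd_of_sq_zpow_eq_sq_pow hnp hP (by rw [← hsq, hq]), fun hPe => ?_⟩
    have hq' : (q : ℚ) ^ P = (r : ℚ) ^ n := by exact_mod_cast congrArg Units.val hq
    exact hq' ▸ hPe.pow_pos q.ne_zero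
  · rintro ⟨⟨c, hc⟩, hpos⟩
    -- `ε` is `±1`; for odd `P` it is a `P`-th power, for even `P` positivity forces `ε = 1`.
    obtain ⟨ε, hε⟩ : ∃ ε : ℚˣ, r ^ n = ε * (r₀ ^ c) ^ P := ⟨r ^ n * ((r₀ ^ c) ^ P)⁻¹, by group⟩
    have hsP : r₀ ^ ((e : ℤ) * n) = (r₀ ^ c) ^ P := by rw [hc, mul_comm, zpow_mul, zpow_natCast]
    have hε1 : ε = 1 ∨ ε = -1 := by
      refine Units.eq_or_eq_neg_of_pow_eq_pow two_ne_zero ?_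
      rw [hsP, hε, mul_pow] at hsq
      rw [one_pow]
      exact mul_eq_right.mp hsq
    rcases Nat.even_or_odd P with hPe | hPo
    · refine ⟨r₀ ^ c, ?_⟩
      rcases hε1 with rfl | rfl
      · rw [hε, one_mul]
      · rw [neg_one_mul] at hε
        have : (r : ℚ) ^ n = -((r₀ : ℚ) ^ c) ^ P := by exact_mod_cast congrArg Units.val hε
        exact absurd (hpos hPe) (this ▸ (neg_nonpos.mpr (hPe.pow_nonneg _)).not_gt)
    · refine ⟨ε * r₀ ^ c, ?_⟩
      rcases hε1 with rfl | rfl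
      · rw [hε, one_mul, one_mul]
      · rw [hε, mul_pow, hPo.neg_one_pow]

theorem isSquare_neg_of_neg (hrep : r = r₀ ^ e ∨ r = -r₀ ^ e) (he : Even e) (hr : (r : ℚ) < 0) :
    IsSquare (-r) := by
  rcases hrep with rfl | rfl
  · exact absurd hr (by push_cast; exact (he.pow_nonneg _).not_gt)
  · obtain ⟨m, rfl⟩ := he
    exact ⟨r₀ ^ m, by rw [neg_neg, pow_add]⟩

theorem zpow_pos_of_not_twisted (hrep : r = r₀ ^ e ∨ r = -r₀ ^ e) {p k : ℕ} (hp : p.Prime)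
    (htw : ¬(p = 2 ∧ p ^ k ∣ e ∧ IsSquare (-r))) {n : ℤ} (hdvd : ((p ^ k : ℕ) : ℤ) ∣ e * n)
    (hPe : Even (p ^ k)) : 0 < (r : ℚ) ^ n := by
  obtain ⟨rfl, hk⟩ : p = 2 ∧ k ≠ 0 := by rwa [Nat.even_pow, hp.even_iff] at hPe
  rcases Int.even_or_odd n with hn | hn
  · exact hn.zpow_pos r.ne_zero
  have he : 2 ^ k ∣ e := by
    have hcop : IsCoprime ((2 ^ k : ℕ) : ℤ) n := by
      push_cast
      exact (Int.isCoprime_two_left.mpr hn).pow_left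
    exact Int.natCast_dvd_natCast.mp (hcop.dvd_of_dvd_mul_right hdvd)
  have hr : 0 < (r : ℚ) := by
    by_contra hr
    have he2 : Even e := even_iff_two_dvd.mpr ((dvd_pow_self 2 hk).trans he)
    exact htw ⟨rfl, he, isSquare_neg_of_neg hrep he2 ((not_lt.mp hr).lt_of_ne r.ne_zero)⟩
  exact zpow_pos hr n

end PerfectPowers

theorem card_radicalQuot_general (r r₀ : ℚˣ) (e : ℕ)
    (h1 : r ≠ 1) (h2 : r ≠ -1)
    (hrep : r = r₀ ^ e ∨ r = -r₀ ^ e)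
    (hnp : ∀ m : ℕ, 2 ≤ m → (¬∃ s : ℚˣ, s ^ m = r₀) ∧ (¬∃ s : ℚˣ, s ^ m = -r₀))
    (p k : ℕ) (hp : p.Prime) (hk : 1 ≤ k) :
    (¬(p = 2 ∧ p ^ k ∣ e ∧ IsSquare (-r)) →
      Nat.card (radicalQuot r (p ^ k)) = p ^ k / Nat.gcd (p ^ k) e) ∧
    ((p = 2 ∧ p ^ k ∣ e ∧ IsSquare (-r)) →
      Nat.card (radicalQuot r (p ^ k)) = 2) := by
  have hP : p ^ k ≠ 0 := pow_ne_zero k hp.ne_zero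
  have hr : ¬IsOfFinOrder r := fun h => (Units.eq_one_or_eq_neg_one_of_isOfFinOrder h).elim h1 h2
  have hS := exists_pow_eq_zpow_iff hrep hnp hP
  constructor
  · intro htw
    refine card_radicalQuot_eq hr hP fun n => ?_
    rw [hS, ← Int.natCast_dvd_mul_iff_div_gcd_dvd hP]
    exact and_iff_left_of_imp (zpow_pos_of_not_twisted hrep hp htw)
  · rintro ⟨rfl, he, hsq⟩
    refine card_radicalQuot_eq hr hP fun n => ?_
    have hPe : Even (2 ^ k) := (Nat.even_pow' (by omega)).mpr even_two
    rw [hS, and_iff_right (dvd_mul_of_dvd_left (by exact_mod_cast he) n), forall_prop_of_true hPe,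
      zpow_pos_iff_even_of_neg (Units.val_neg_of_isSquare_neg hsq), Nat.cast_ofNat,
      even_iff_two_dvd]

/-- The group `C_P = R_P/(μ_P·(R_P ∩ ℚ*))` has order `P/gcd(P,e)`, except in the twisted
case where `-r` is a square and `P > 1` is a `2`-power dividing `e`, when it has order `2`. -/
theorem card_radicalQuot (r r₀ : ℚˣ) (e : ℕ) (he : 1 ≤ e)
    (h1 : r ≠ 1) (h2 : r ≠ -1)
    (hrep : r = r₀ ^ e ∨ r = -r₀ ^ e)
    (hnp : ∀ m : ℕ, 2 ≤ m → (¬∃ s : ℚˣ, s ^ m = r₀) ∧ (¬∃ s : ℚˣ, s ^ m = -r₀))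
    (p k : ℕ) (hp : p.Prime) (hk : 1 ≤ k) :
    (¬(p = 2 ∧ p ^ k ∣ e ∧ IsSquare (-r)) →
      Nat.card (radicalQuot r (p ^ k)) = p ^ k / Nat.gcd (p ^ k) e) ∧
    ((p = 2 ∧ p ^ k ∣ e ∧ IsSquare (-r)) →
      Nat.card (radicalQuot r (p ^ k)) = 2) :=
  card_radicalQuot_general r r₀ e h1 h2 hrep hnp p k hp hk

end
end

section
/- Let r ∈ ℚ* be neither 0, 1, nor −1, and assume neither r₀ nor −r₀ is a perfect power in ℚ* (where r = ±r₀^e as usual). Then the largest integer k for which the splitting field of X^k − r₀ over ℚ is abelian equals 2; equivalently, r₀^ℚ ∩ ℚ_ab* = r₀^{(1/2)ℤ}. -/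
/-!
For `k ≤ 2` the Galois group acts faithfully on at most two roots, so it is abelian. For `k ≥ 3`,
`4 ∣ k` or an odd prime `p ∣ k`, and `L` contains a root `γ` of `X ^ n - r₀` with `n ∈ {4, p}`,
together with `τ` and a primitive `n`-th root of unity `μ` such that `τ γ = μ γ`. Writing
`σ γ = μ ^ s γ`, `σ μ = μ ^ c` and `τ μ = μ ^ t`, commutativity `σ τ γ = τ σ γ` forces
`c - 1 ≡ (t - 1) s (mod n)`, so `μ ^ e γ ^ f` is fixed by every `σ`, hence rational, as soon as
`(t - 1) e + f ≡ 0 (mod n)`. For `n = p` this yields a rational primitive `p`-th root of unity or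
a rational `p`-th root of `r₀`; for `n = 4` a rational square root of `-1` or of `-r₀`.
-/

open Polynomial

section QuadraticGalois

variable {F L : Type*} [Field F] [Field L] [Algebra F L]

theorem Polynomial.Gal.mul_comm_of_natDegree_le_two {p : F[X]} (hp : p.natDegree ≤ 2)
    (σ τ : p.Gal) : σ * τ = τ * σ := by
  have := Fact.mk (SplittingField.splits p)
  have hroots : Nat.card (p.rootSet p.SplittingField) ≤ 2 :=
    (Nat.card_coe_set_eq _).trans_le ((ncard_rootSet_le p _).trans hp)
  have := Equiv.Perm.isMulCommutative_iff_card_le_two.mpr hroots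
  apply Gal.galActionHom_injective p p.SplittingField
  rw [map_mul, map_mul, mul_comm']

theorem IsSplittingField.mul_comm_of_natDegree_le_two (p : F[X]) [IsSplittingField F L p]
    (hp : p.natDegree ≤ 2) (σ τ : L ≃ₐ[F] L) : σ * τ = τ * σ := by
  apply (AlgEquiv.autCongr (IsSplittingField.algEquiv L p)).injective
  rw [map_mul, map_mul]
  exact Gal.mul_comm_of_natDegree_le_two hp _ _

end QuadraticGalois

theorem IsSplittingField.exists_pow_eq_algebraMap_of_dvd {K L : Type*} [Field K] [Field L]
    [Algebra K L] (a : K) {k n : ℕ} (hk : k ≠ 0) [IsSplittingField K L (X ^ k - C a)]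
    (hn : n ∣ k) : ∃ γ : L, γ ^ n = algebraMap K L a := by
  obtain ⟨m, rfl⟩ := hn
  obtain ⟨α, hα⟩ := (IsSplittingField.splits L (X ^ (n * m) - C a)).exists_eval_eq_zero
    (by rw [degree_map, degree_X_pow_sub_C (Nat.pos_of_ne_zero hk)]; exact_mod_cast hk)
  refine ⟨α ^ m, ?_⟩
  simpa [sub_eq_zero, ← pow_mul, mul_comm m] using hα

theorem IsGalois.exists_apply_ne_of_notMem_range {K L : Type*} [Field K] [Field L] [Algebra K L]
    [FiniteDimensional K L] [IsGalois K L] {x : L} (hx : x ∉ Set.range (algebraMap K L)) :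
    ∃ σ : L ≃ₐ[K] L, σ x ≠ x := by
  simpa using mt (IsGalois.mem_range_algebraMap_iff_fixed x).mpr hx

namespace IsPrimitiveRoot

variable {K L : Type*} [Field K] [Field L] [Algebra K L] {n : ℕ} {μ : L}

theorem pow_eq_pow_iff_natCast_eq [NeZero n] (hμ : IsPrimitiveRoot μ n) {a b : ℕ} :
    μ ^ a = μ ^ b ↔ (a : ZMod n) = b := by
  rw [ZMod.natCast_eq_natCast_iff, hμ.eq_orderOf]
  exact (hμ.isOfFinOrder (NeZero.ne n)).pow_eq_pow_iff_modEq

theorem exists_algEquiv_apply_eq_pow_mul [NeZero n] (hμ : IsPrimitiveRoot μ n) {x : L}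
    (hx : x ≠ 0) {a : K} (hxa : x ^ n = algebraMap K L a) (σ : L ≃ₐ[K] L) :
    ∃ s : ℕ, σ x = μ ^ s * x := by
  obtain ⟨s, -, hs⟩ := hμ.eq_pow_of_pow_eq_one (ξ := σ x / x) <| by
    rw [div_pow, ← map_pow, hxa, AlgEquiv.commutes, ← hxa, div_self (pow_ne_zero n hx)]
  exact ⟨s, by rw [hs, div_mul_cancel₀ _ hx]⟩

theorem natCast_add_eq_of_commute [NeZero n] (hμ : IsPrimitiveRoot μ n) {γ : L} (hγ : γ ≠ 0)
    {σ τ : L ≃ₐ[K] L} (hστ : σ * τ = τ * σ) {s c t : ℕ} (hσγ : σ γ = μ ^ s * γ)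
    (hσμ : σ μ = μ ^ c) (hτγ : τ γ = μ * γ) (hτμ : τ μ = μ ^ t) :
    (c + s : ZMod n) = t * s + 1 := by
  have h : μ ^ (c + s) * γ = μ ^ (t * s + 1) * γ :=
    calc μ ^ (c + s) * γ = σ (τ γ) := by rw [hτγ, map_mul, hσμ, hσγ]; ring
      _ = τ (σ γ) := by rw [← AlgEquiv.mul_apply, hστ, AlgEquiv.mul_apply]
      _ = μ ^ (t * s + 1) * γ := by rw [hσγ, map_mul, map_pow, hτμ, hτγ]; ring
  exact_mod_cast hμ.pow_eq_pow_iff_natCast_eq.mp (mul_right_cancel₀ hγ h)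

theorem pow_mul_pow_mem_range_of_commute [NeZero n] [FiniteDimensional K L] [IsGalois K L]
    (hcomm : ∀ σ τ : L ≃ₐ[K] L, σ * τ = τ * σ) (hμ : IsPrimitiveRoot μ n) {γ : L} (hγ : γ ≠ 0)
    {a : K} (hγa : γ ^ n = algebraMap K L a) {τ : L ≃ₐ[K] L} (hτγ : τ γ = μ * γ) {t e f : ℕ}
    (hτμ : τ μ = μ ^ t) (hef : ((t : ZMod n) - 1) * e + f = 0) :
    μ ^ e * γ ^ f ∈ Set.range (algebraMap K L) := by
  refine (IsGalois.mem_range_algebraMap_iff_fixed _).mpr fun σ => ?_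
  obtain ⟨s, hσγ⟩ := hμ.exists_algEquiv_apply_eq_pow_mul hγ hγa σ
  obtain ⟨c, hσμ⟩ := hμ.exists_algEquiv_apply_eq_pow_mul (hμ.ne_zero (NeZero.ne n))
    (by rw [hμ.pow_eq_one, map_one]) σ
  rw [← pow_succ] at hσμ
  have hrel := hμ.natCast_add_eq_of_commute hγ (hcomm σ τ) hσγ hσμ hτγ hτμ
  have hexp : μ ^ ((c + 1) * e + s * f) = μ ^ e := by
    rw [hμ.pow_eq_pow_iff_natCast_eq]
    push_cast at hrel ⊢
    linear_combination (e : ZMod n) * hrel + (s : ZMod n) * hef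
  calc σ (μ ^ e * γ ^ f) = μ ^ ((c + 1) * e + s * f) * γ ^ f := by
        rw [map_mul, map_pow, map_pow, hσμ, hσγ]; ring
    _ = μ ^ e * γ ^ f := by rw [hexp]

end IsPrimitiveRoot

section Abelian

variable {K L : Type*} [Field K] [Field L] [Algebra K L] [FiniteDimensional K L] [IsGalois K L]

theorem exists_pow_eq_or_exists_isPrimitiveRoot_of_commute
    (hcomm : ∀ σ τ : L ≃ₐ[K] L, σ * τ = τ * σ) {p : ℕ} [hp : Fact p.Prime] {γ : L} {a : K}
    (hγa : γ ^ p = algebraMap K L a) : (∃ b : K, b ^ p = a) ∨ ∃ ζ : K, IsPrimitiveRoot ζ p := by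
  by_cases hγK : γ ∈ Set.range (algebraMap K L)
  · obtain ⟨b, rfl⟩ := hγK
    exact Or.inl ⟨b, (algebraMap K L).injective (by rw [map_pow, hγa])⟩
  have hγ : γ ≠ 0 := by
    rintro rfl
    exact hγK ⟨0, map_zero _⟩
  obtain ⟨τ, hτγ⟩ := IsGalois.exists_apply_ne_of_notMem_range hγK
  set μ := τ γ / γ
  have hμ : IsPrimitiveRoot μ p := by
    refine IsPrimitiveRoot.iff_orderOf.mpr (orderOf_eq_prime ?_ ?_)
    · rw [div_pow, ← map_pow, hγa, AlgEquiv.commutes, ← hγa, div_self (pow_ne_zero _ hγ)]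
    · rwa [Ne, div_eq_one_iff_eq hγ]
  have hτγ' : τ γ = μ * γ := (div_mul_cancel₀ _ hγ).symm
  obtain ⟨t, hτμ⟩ := hμ.exists_algEquiv_apply_eq_pow_mul (hμ.ne_zero hp.out.ne_zero)
    (by rw [hμ.pow_eq_one, map_one]) τ
  rw [← pow_succ] at hτμ
  by_cases ht : ((t + 1 : ℕ) : ZMod p) = 1
  · obtain ⟨ζ, hζ⟩ := hμ.pow_mul_pow_mem_range_of_commute hcomm hγ hγa hτγ' hτμ
      (e := 1) (f := 0) (by rw [ht]; ring)
    rw [pow_one, pow_zero, mul_one] at hζ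
    exact Or.inr ⟨ζ, (hζ ▸ hμ).of_map_of_injective (algebraMap K L).injective⟩
  · obtain ⟨b, hb⟩ := hμ.pow_mul_pow_mem_range_of_commute hcomm hγ hγa hτγ' hτμ
      (e := (-(((t + 1 : ℕ) : ZMod p) - 1)⁻¹).val) (f := 1)
      (by rw [ZMod.natCast_zmod_val, mul_neg, mul_inv_cancel₀ (sub_ne_zero.mpr ht)]; push_cast; ring)
    refine Or.inl ⟨b, (algebraMap K L).injective ?_⟩
    rw [map_pow, hb, mul_pow, ← pow_mul, mul_comm _ p, pow_mul, hμ.pow_eq_one, one_pow, one_mul,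
      pow_one, hγa]

theorem isSquare_or_isSquare_neg_or_isSquare_neg_one_of_commute (h2 : (2 : L) ≠ 0)
    (hcomm : ∀ σ τ : L ≃ₐ[K] L, σ * τ = τ * σ) {γ : L} {a : K}
    (hγa : γ ^ 4 = algebraMap K L a) : IsSquare a ∨ IsSquare (-a) ∨ IsSquare (-1 : K) := by
  by_cases ha : IsSquare a
  · exact Or.inl ha
  have hβa : (γ ^ 2) ^ 2 = algebraMap K L a := by rw [← pow_mul]; exact hγa
  have hβK : γ ^ 2 ∉ Set.range (algebraMap K L) := by
    rintro ⟨b, hb⟩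
    exact ha ⟨b, (algebraMap K L).injective (by rw [map_mul, hb, ← sq, hβa])⟩
  have hγ : γ ≠ 0 := by
    rintro rfl
    exact hβK ⟨0, by simp⟩
  obtain ⟨τ, hτβ⟩ := IsGalois.exists_apply_ne_of_notMem_range hβK
  have hτβ' : τ (γ ^ 2) = -γ ^ 2 := by
    refine (sq_eq_sq_iff_eq_or_eq_neg.mp ?_).resolve_left hτβ
    rw [← map_pow, hβa, AlgEquiv.commutes]
  set j := τ γ / γ
  have hj2 : j ^ 2 = -1 := by
    rw [div_pow, ← map_pow, hτβ', neg_div, div_self (pow_ne_zero 2 hγ)]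
  have hj : IsPrimitiveRoot j 4 := by
    refine IsPrimitiveRoot.iff_orderOf.mpr (orderOf_eq_prime_pow (p := 2) (n := 1) ?_ ?_)
    · rw [pow_one, hj2]
      exact fun h => h2 (by linear_combination -h)
    · rw [show 2 ^ (1 + 1) = 2 * 2 from rfl, pow_mul, hj2]
      norm_num
  have hτγ : τ γ = j * γ := (div_mul_cancel₀ _ hγ).symm
  have hτj : τ j = j ∨ τ j = -j :=
    sq_eq_sq_iff_eq_or_eq_neg.mp (by rw [← map_pow, hj2, map_neg, map_one])
  rcases hτj with hτj | hτj
  · obtain ⟨c, hc⟩ := hj.pow_mul_pow_mem_range_of_commute hcomm hγ hγa hτγ (t := 1) (e := 1)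
      (f := 0) (by rw [hτj, pow_one]) (by simp)
    refine Or.inr (Or.inr ⟨c, (algebraMap K L).injective ?_⟩)
    rw [map_mul, hc, map_neg, map_one, ← sq, pow_zero, mul_one, pow_one, hj2]
  · obtain ⟨c, hc⟩ := hj.pow_mul_pow_mem_range_of_commute hcomm hγ hγa hτγ (t := 3) (e := 1)
      (f := 2) (by rw [hτj, pow_succ, hj2]; ring) (by decide)
    refine Or.inr (Or.inl ⟨c, (algebraMap K L).injective ?_⟩)
    rw [map_mul, hc, map_neg, ← hγa]
    linear_combination (-γ ^ 4) * hj2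

end Abelian

theorem Rat.not_isSquare_neg_one : ¬IsSquare (-1 : ℚ) := by
  rintro ⟨r, hr⟩
  nlinarith [mul_self_nonneg r]

theorem Rat.not_isPrimitiveRoot_of_odd {ζ : ℚ} {p : ℕ} (hp : 1 < p) (hodd : Odd p) :
    ¬IsPrimitiveRoot ζ p := fun hζ =>
  hζ.ne_one hp (hodd.strictMono_pow.injective (by simpa using hζ.pow_eq_one))

theorem abelian_splitting_field_binomial_iff_general (r₀ : ℚ)
    (hnp : ∀ m : ℕ, 2 ≤ m → (¬∃ s : ℚ, s ^ m = r₀) ∧ (¬∃ s : ℚ, s ^ m = -r₀)) :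
    ∀ (k : ℕ) (L : Type) [Field L] [Algebra ℚ L],
      IsSplittingField ℚ L (X ^ k - C r₀) →
        ((∀ σ τ : L ≃ₐ[ℚ] L, σ * τ = τ * σ) ↔ k ≤ 2) := by
  intro k L _ _ _
  refine ⟨fun hcomm => ?_, fun hk =>
    IsSplittingField.mul_comm_of_natDegree_le_two (X ^ k - C r₀) (by rwa [natDegree_X_pow_sub_C])⟩
  by_contra! hk
  have hr₀ : r₀ ≠ 0 := fun h => (hnp 2 le_rfl).1 ⟨0, by rw [h]; ring⟩
  have := IsSplittingField.finiteDimensional L (X ^ k - C r₀)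
  have := IsGalois.of_separable_splitting_field (F := ℚ) (E := L)
    (separable_X_pow_sub_C (n := k) r₀ (Nat.cast_ne_zero.mpr (by omega)) hr₀)
  rcases Nat.eq_two_pow_or_exists_odd_prime_and_dvd k with ⟨i, rfl⟩ | ⟨p, hp, hpk, hpodd⟩
  · have hi : 2 ≤ i := (Nat.pow_lt_pow_iff_right (a := 2) (n := 1) (by norm_num)).mp hk
    obtain ⟨γ, hγ⟩ := IsSplittingField.exists_pow_eq_algebraMap_of_dvd (L := L) r₀ (by omega)
      (pow_dvd_pow 2 hi)
    have := charZero_of_injective_algebraMap (algebraMap ℚ L).injective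
    rcases isSquare_or_isSquare_neg_or_isSquare_neg_one_of_commute two_ne_zero hcomm hγ with
      ⟨s, hs⟩ | ⟨s, hs⟩ | h
    · exact (hnp 2 le_rfl).1 ⟨s, by rw [hs, sq]⟩
    · exact (hnp 2 le_rfl).2 ⟨s, by rw [hs, sq]⟩
    · exact Rat.not_isSquare_neg_one h
  · have := Fact.mk hp
    obtain ⟨γ, hγ⟩ := IsSplittingField.exists_pow_eq_algebraMap_of_dvd (L := L) r₀ (by omega) hpk
    rcases exists_pow_eq_or_exists_isPrimitiveRoot_of_commute hcomm hγ with h | ⟨ζ, hζ⟩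
    · exact (hnp p hp.two_le).1 h
    · exact Rat.not_isPrimitiveRoot_of_odd hp.one_lt hpodd hζ

/-- If neither `r₀` nor `-r₀` is a perfect power in `ℚ*`, then the largest `k` for which
the splitting field of `X^k - r₀` over `ℚ` is abelian equals `2`: the splitting field of
`X^k - r₀` has commutative automorphism group if and only if `k ≤ 2`. -/
theorem abelian_splitting_field_binomial_iff (r₀ : ℚ)
    (h0 : r₀ ≠ 0) (h1 : r₀ ≠ 1) (h2 : r₀ ≠ -1)
    (hnp : ∀ m : ℕ, 2 ≤ m → (¬∃ s : ℚ, s ^ m = r₀) ∧ (¬∃ s : ℚ, s ^ m = -r₀)) :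
    ∀ (k : ℕ) (L : Type) [Field L] [Algebra ℚ L],
      IsSplittingField ℚ L (X ^ k - C r₀) →
        ((∀ σ τ : L ≃ₐ[ℚ] L, σ * τ = τ * σ) ↔ k ≤ 2) :=
  abelian_splitting_field_binomial_iff_general r₀ hnp
end

section
/- Let a, f be coprime positive integers and r a rational number that is not a p-th power for any prime p dividing gcd(a−1, f), and suppose −r is not a square. Define A(r, a mod f) = (1/φ(f))·∏_{p | gcd(a−1,f)}(1 − 1/p)·∏_{p ∤ f}(1 − 1/[F_p:ℚ]), with F_p = ℚ(ζ_p, r^{1/p}). Then A(r, a mod f) > 0. -/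
open Polynomial

/-! Every factor `1 - 1/[F_p:ℚ]` is positive: `[F_2:ℚ] = 2` as `r` is not a square, and for odd
`p` the field `F_p` contains a primitive `p`-th root of unity (a ratio of two roots of `X^p - r`),
so `p - 1 ∣ [F_p:ℚ]`. Since `r ≠ 0, ±1`, comparing heights shows `r` is a `p`-th power for only
finitely many `p`; for all other `p`, `X^p - r` is irreducible, so `p(p-1) ∣ [F_p:ℚ]`. Hence
`∑ 1/[F_p:ℚ]` converges, and so does `∑ log (1 - 1/[F_p:ℚ])`: the product is the exponential of a
convergent series. -/

theorem Rat.le_max_natAbs_num_den_of_pow_eq {r s : ℚ} {n : ℕ} (hr0 : r ≠ 0) (hr1 : r ≠ 1)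
    (hrm1 : r ≠ -1) (hs : s ^ n = r) : n ≤ max r.num.natAbs r.den := by
  have hnum : r.num.natAbs = s.num.natAbs ^ n := by rw [← hs, Rat.num_pow, Int.natAbs_pow]
  have hden : r.den = s.den ^ n := by rw [← hs, Rat.den_pow]
  by_cases hsnum : 2 ≤ s.num.natAbs
  · exact le_max_of_le_left <| hnum ▸ Nat.lt_two_pow_self.le.trans (Nat.pow_le_pow_left hsnum n)
  by_cases hsden : 2 ≤ s.den
  · exact le_max_of_le_right <| hden ▸ Nat.lt_two_pow_self.le.trans (Nat.pow_le_pow_left hsden n)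
  have hs_int : (s.num : ℚ) = s := Rat.coe_int_num_of_den_eq_one (by have := s.pos; omega)
  have hs_unit : s.num = -1 ∨ s.num = 0 ∨ s.num = 1 := by omega
  exfalso
  rcases hs_unit with h | h | h <;> rw [← hs_int, h] at hs <;> push_cast at hs
  · rcases neg_one_pow_eq_or ℚ n with h' | h' <;> rw [h'] at hs
    exacts [hr1 hs.symm, hrm1 hs.symm]
  · rcases n with _ | n
    exacts [hr1 (by simpa using hs.symm), hr0 (by simpa using hs.symm)]
  · exact hr1 (by simpa using hs.symm)

theorem Rat.finite_setOf_pow_eq {r : ℚ} (hr0 : r ≠ 0) (hr1 : r ≠ 1) (hrm1 : r ≠ -1) :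
    {n : ℕ | ∃ s : ℚ, s ^ n = r}.Finite :=
  (Set.finite_Iic _).subset fun _ ⟨_, hs⟩ => Rat.le_max_natAbs_num_den_of_pow_eq hr0 hr1 hrm1 hs

theorem exists_isPrimitiveRoot_of_splits_X_pow_sub_C {L : Type*} [Field L] {p : ℕ}
    (hp : p.Prime) (hpL : (p : L) ≠ 0) {b : L} (hb : b ≠ 0) (hs : (X ^ p - C b).Splits) :
    ∃ ζ : L, IsPrimitiveRoot ζ p := by
  classical
  have hcard : (X ^ p - C b).roots.toFinset.card = p := by
    rw [Multiset.toFinset_card_of_nodup (nodup_roots (separable_X_pow_sub_C b hpL hb)),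
      ← hs.natDegree_eq_card_roots, natDegree_X_pow_sub_C]
  obtain ⟨α, hα, β, hβ, hne⟩ := Finset.one_lt_card.mp (hcard ▸ hp.one_lt)
  have hroot : ∀ x ∈ (X ^ p - C b).roots.toFinset, x ^ p = b := by
    intro x hx
    simpa [sub_eq_zero, X_pow_sub_C_ne_zero hp.pos b] using hx
  have hα0 : α ≠ 0 := by
    rintro rfl
    exact hb (by simpa [hp.ne_zero] using (hroot 0 hα).symm)
  have : Fact p.Prime := ⟨hp⟩
  refine ⟨β / α, IsPrimitiveRoot.iff_orderOf.mpr (orderOf_eq_prime ?_ ?_)⟩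
  · rw [div_pow, hroot α hα, hroot β hβ, div_self hb]
  · exact (div_eq_one_iff_eq hα0).not.mpr hne.symm

theorem IsPrimitiveRoot.totient_dvd_finrank_rat {L : Type*} [Field L] [CharZero L]
    [FiniteDimensional ℚ L] {ζ : L} {n : ℕ} (hζ : IsPrimitiveRoot ζ n) (hn : 0 < n) :
    n.totient ∣ Module.finrank ℚ L := by
  simpa [← cyclotomic_eq_minpoly_rat hζ hn, natDegree_cyclotomic] using
    minpoly.degree_dvd (IsIntegral.of_finite ℚ ζ)

theorem prime_dvd_finrank_splittingField_X_pow_sub_C {K : Type*} [Field K] {p : ℕ}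
    (hp : p.Prime) {a : K} (ha : ∀ b : K, b ^ p ≠ a) :
    p ∣ Module.finrank K (X ^ p - C a).SplittingField := by
  simpa using (X_pow_sub_C_irreducible_of_prime hp ha).natDegree_dvd_finrank
    (SplittingField.splits (X ^ p - C a))

theorem prime_sub_one_dvd_finrank_splittingField_X_pow_sub_C {p : ℕ} (hp : p.Prime) {r : ℚ}
    (hr : r ≠ 0) : p - 1 ∣ Module.finrank ℚ (X ^ p - C r).SplittingField := by
  have hs := SplittingField.splits (X ^ p - C r)
  simp only [Polynomial.map_sub, Polynomial.map_pow, map_X, map_C] at hs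
  obtain ⟨ζ, hζ⟩ := exists_isPrimitiveRoot_of_splits_X_pow_sub_C hp
    (Nat.cast_ne_zero.mpr hp.ne_zero) ((_root_.map_ne_zero _).mpr hr) hs
  simpa [Nat.totient_prime hp] using hζ.totient_dvd_finrank_rat hp.pos

theorem two_le_finrank_splittingField_X_pow_sub_C {p : ℕ} (hp : p.Prime) {r : ℚ} (hr : r ≠ 0)
    (hsq : ¬∃ s : ℚ, s ^ 2 = r) : 2 ≤ Module.finrank ℚ (X ^ p - C r).SplittingField := by
  obtain rfl | hp2 := eq_or_ne p 2
  · exact Nat.le_of_dvd Module.finrank_pos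
      (prime_dvd_finrank_splittingField_X_pow_sub_C hp fun s hs => hsq ⟨s, hs⟩)
  · have := Nat.le_of_dvd Module.finrank_pos
      (prime_sub_one_dvd_finrank_splittingField_X_pow_sub_C hp hr)
    have := hp.two_le.lt_of_ne' hp2
    omega

theorem prime_mul_sub_one_le_finrank_splittingField_X_pow_sub_C {p : ℕ} (hp : p.Prime) {r : ℚ}
    (hr : r ≠ 0) (hpow : ∀ s : ℚ, s ^ p ≠ r) :
    p * (p - 1) ≤ Module.finrank ℚ (X ^ p - C r).SplittingField := by
  have hcop : p.Coprime (p - 1) := (Nat.coprime_self_sub_right hp.one_le).mpr p.coprime_one_right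
  exact Nat.le_of_dvd Module.finrank_pos <| hcop.mul_dvd_of_dvd_of_dvd
    (prime_dvd_finrank_splittingField_X_pow_sub_C hp hpow)
    (prime_sub_one_dvd_finrank_splittingField_X_pow_sub_C hp hr)

theorem Nat.one_div_cast_lt_one {n : ℕ} (hn : 1 < n) : 1 / (n : ℝ) < 1 := by
  rw [div_lt_one (by positivity)]
  exact_mod_cast hn

theorem Real.tprod_one_sub_pos_of_summable {ι : Type*} {x : ι → ℝ} (hx : ∀ i, x i < 1)
    (hs : Summable x) : 0 < ∏' i, (1 - x i) := by
  have hpos : ∀ i, 0 < 1 - x i := fun i => sub_pos.mpr (hx i)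
  have hlog : Summable fun i => Real.log (1 - x i) := by
    simpa [sub_eq_add_neg] using Real.summable_log_one_add_of_summable hs.neg
  exact Real.rexp_tsum_eq_tprod hpos hlog ▸ Real.exp_pos _

theorem summable_one_div_finrank_splittingField_X_pow_sub_C {P : ℕ → Prop}
    (hP : ∀ p, P p → p.Prime) {r : ℚ} (hr0 : r ≠ 0) (hr1 : r ≠ 1) (hrm1 : r ≠ -1) :
    Summable fun q : {p : ℕ // P p} =>
      1 / (Module.finrank ℚ (X ^ q.1 - C r).SplittingField : ℝ) := by
  have hbound : Summable fun q : {p : ℕ // P p} => 2 / (q.1 : ℝ) ^ 2 :=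
    (((Real.summable_one_div_nat_pow.mpr one_lt_two).mul_left 2).comp_injective
      Subtype.val_injective).congr fun _ => mul_one_div _ _
  refine hbound.of_norm_bounded_eventually ?_
  filter_upwards [((Rat.finite_setOf_pow_eq hr0 hr1 hrm1).preimage
    Subtype.val_injective.injOn).compl_mem_cofinite] with q hpow
  have hq := hP q.1 q.2
  have hd := Nat.cast_le (α := ℝ) |>.mpr <|
    prime_mul_sub_one_le_finrank_splittingField_X_pow_sub_C hq hr0 (by simpa using hpow)
  rw [Nat.cast_mul, Nat.cast_sub hq.one_le, Nat.cast_one] at hd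
  have hq2 : (2 : ℝ) ≤ q.1 := by exact_mod_cast hq.two_le
  rw [Real.norm_of_nonneg (by positivity),
    div_le_div_iff₀ (Nat.cast_pos.mpr Module.finrank_pos) (by positivity)]
  nlinarith

theorem artin_constant_progression_pos_general (a f : ℕ) (hf : 0 < f)
    (r : ℚ) (hr0 : r ≠ 0) (hr1 : r ≠ 1) (hrm1 : r ≠ -1)
    (hnsq : ¬∃ s : ℚ, s ^ 2 = r) :
    Multipliable (fun q : {p : ℕ // p.Prime ∧ ¬p ∣ f} =>
      (1 : ℝ) - 1 / (Module.finrank ℚ (X ^ q.1 - C r).SplittingField : ℝ)) ∧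
    0 < (1 / (Nat.totient f : ℝ))
        * (∏ p ∈ (Nat.gcd (a - 1) f).primeFactors, ((1 : ℝ) - 1 / (p : ℝ)))
        * ∏' q : {p : ℕ // p.Prime ∧ ¬p ∣ f},
            ((1 : ℝ) - 1 / (Module.finrank ℚ (X ^ q.1 - C r).SplittingField : ℝ)) := by
  have hsum : Summable fun q : {p : ℕ // p.Prime ∧ ¬p ∣ f} =>
      1 / (Module.finrank ℚ (X ^ q.1 - C r).SplittingField : ℝ) :=
    summable_one_div_finrank_splittingField_X_pow_sub_C (fun _ h => h.1) hr0 hr1 hrm1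
  have hlt : ∀ q : {p : ℕ // p.Prime ∧ ¬p ∣ f},
      1 / (Module.finrank ℚ (X ^ q.1 - C r).SplittingField : ℝ) < 1 := fun q =>
    Nat.one_div_cast_lt_one (two_le_finrank_splittingField_X_pow_sub_C q.2.1 hr0 hnsq)
  refine ⟨?_, mul_pos (mul_pos ?_ ?_) (Real.tprod_one_sub_pos_of_summable hlt hsum)⟩
  · simpa [sub_eq_add_neg] using Real.multipliable_one_add_of_summable hsum.neg
  · exact one_div_pos.mpr (Nat.cast_pos.mpr (Nat.totient_pos.mpr hf))
  · exact Finset.prod_pos fun p hp =>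
      sub_pos.mpr (Nat.one_div_cast_lt_one (Nat.prime_of_mem_primeFactors hp).one_lt)

/-- The Artin constant `A(r, a mod f)` for primes in the arithmetic progression `a mod f`
with prescribed primitive root `r` is positive (here `[F_p:ℚ]` is the degree of the
splitting field of `X^p - r`). -/
theorem artin_constant_progression_pos (a f : ℕ) (ha : 0 < a) (hf : 0 < f)
    (hcop : Nat.Coprime a f) (r : ℚ) (hr0 : r ≠ 0) (hr1 : r ≠ 1) (hrm1 : r ≠ -1)
    (hnsq : ¬∃ s : ℚ, s ^ 2 = r) (hnsqneg : ¬∃ s : ℚ, s ^ 2 = -r)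
    (hnp : ∀ p : ℕ, p.Prime → p ∣ Nat.gcd (a - 1) f → ¬∃ s : ℚ, s ^ p = r) :
    Multipliable (fun q : {p : ℕ // p.Prime ∧ ¬p ∣ f} =>
      (1 : ℝ) - 1 / (Module.finrank ℚ (X ^ q.1 - C r).SplittingField : ℝ)) ∧
    0 < (1 / (Nat.totient f : ℝ))
        * (∏ p ∈ (Nat.gcd (a - 1) f).primeFactors, ((1 : ℝ) - 1 / (p : ℝ)))
        * ∏' q : {p : ℕ // p.Prime ∧ ¬p ∣ f},
            ((1 : ℝ) - 1 / (Module.finrank ℚ (X ^ q.1 - C r).SplittingField : ℝ)) :=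
  artin_constant_progression_pos_general a f hf r hr0 hr1 hrm1 hnsq
end
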